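/- arXiv:2205.06520 — 8 statements merged into one kernel-verified Lean document; each statement's English description precedes it below -/
import Mathlib

section
/- Let ({σ, σ'}, e) be an almost-d-simplex (d ≥ 2) in a simple directed graph. Then the directed graph G = (V, E) with V = Ver(σ) ∪ Ver(σ') and E = Edg(σ) ∪ Edg(σ') ∪ {e} contains exactly one d-simplex. -/
/-- A `d`-simplex of a simple directed graph with edge relation `E`, given as a tuple
of `m = d+1` pairwise distinct vertices with an edge from earlier to later vertices. -/
def IsSimplex {V : Type*} (E : V → V → Prop) {m : ℕ} (σ : Fin m → V) : Prop :=
  Function.Injective σ ∧ ∀ i j : Fin m, i < j → E (σ i) (σ j)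

/-- The set of (directed) edges of a tuple `σ`: `Edg(σ) = {(σ i, σ j) | i < j}`. -/
def EdgSet {V : Type*} {m : ℕ} (σ : Fin m → V) : Set (V × V) :=
  {p | ∃ i j : Fin m, i < j ∧ p = (σ i, σ j)}

/-- An almost-`d`-simplex (`d = m+1`): a pair of `(d-1)`-simplices `σ, σ'` (tuples of
length `d = m+1`) sharing a common boundary `∂_i σ = ∂_{i'} σ'`, differing in the one
vertex (`σ i ≠ σ' i'`), together with the missing pair `e`, which is `(σ i, σ' i')`
(only allowed if `i ≤ i'`) or `(σ' i', σ i)` (only allowed if `i' ≤ i`). -/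
def IsAlmostSimplex {V : Type*} (E : V → V → Prop) {m : ℕ}
    (σ σ' : Fin (m + 1) → V) (e : V × V) : Prop :=
  IsSimplex E σ ∧ IsSimplex E σ' ∧
  ∃ i i' : Fin (m + 1),
    σ ∘ i.succAbove = σ' ∘ i'.succAbove ∧
    σ i ≠ σ' i' ∧
    ((i ≤ i' ∧ e = (σ i, σ' i')) ∨ (i' ≤ i ∧ e = (σ' i', σ i)))

/-!
Say `i ≤ i'` and let `τ₀` be `σ` with the vertex `σ' i'` inserted right after position `i'`.
Its faces opposite `σ' i'` and opposite `σ i` are `σ` and `σ'`, and a pair of its vertices not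
lying in either face is the pair `e = (σ i, σ' i')`; hence `Edg(σ) ∪ Edg(σ') ∪ {e} = Edg(τ₀)`.
An injective tuple with at least two vertices is the only simplex of the graph of its own edges:
every vertex of another such simplex `τ` lies on an edge, hence is a vertex of `τ₀`, and the
induced reindexing is a strictly monotone self-map of `Fin (d + 1)`, hence the identity.
-/

open Function

namespace Fin

lemma castSucc_succAbove_succAbove {m : ℕ} {i j : Fin (m + 1)} (hij : i ≤ j) (k : Fin m) :
    i.castSucc.succAbove (j.succAbove k) = j.succ.succAbove (i.succAbove k) := by
  rw [le_def] at hij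
  ext
  simp only [succAbove, lt_def, val_castSucc, val_succ, apply_ite Fin.val]
  split_ifs <;> omega

lemma eq_of_apply_eq_of_injective_comp_succAbove {α : Type*} {m : ℕ} {τ : Fin (m + 1) → α}
    {k p q : Fin (m + 1)} (hk : Injective (τ ∘ k.succAbove)) (hp : p ≠ k) (hq : q ≠ k)
    (hpq : τ p = τ q) : p = q := by
  obtain ⟨p, rfl⟩ := exists_succAbove_eq hp
  obtain ⟨q, rfl⟩ := exists_succAbove_eq hq
  rw [hk hpq]

end Fin

section EdgSet

variable {V : Type*}

lemma mk_mem_edgSet {m : ℕ} (τ : Fin m → V) {i j : Fin m} (hij : i < j) :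
    (τ i, τ j) ∈ EdgSet τ :=
  ⟨i, j, hij, rfl⟩

lemma edgSet_comp_succAbove_subset {m : ℕ} (τ : Fin (m + 1) → V) (k : Fin (m + 1)) :
    EdgSet (τ ∘ k.succAbove) ⊆ EdgSet τ := by
  rintro _ ⟨i, j, hij, rfl⟩
  exact mk_mem_edgSet τ (Fin.succAbove_lt_succAbove_iff.mpr hij)

lemma mk_mem_edgSet_comp_succAbove {m : ℕ} (τ : Fin (m + 1) → V) {k p q : Fin (m + 1)}
    (hpq : p < q) (hp : p ≠ k) (hq : q ≠ k) : (τ p, τ q) ∈ EdgSet (τ ∘ k.succAbove) := by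
  obtain ⟨p, rfl⟩ := Fin.exists_succAbove_eq hp
  obtain ⟨q, rfl⟩ := Fin.exists_succAbove_eq hq
  exact mk_mem_edgSet (τ ∘ k.succAbove) (Fin.succAbove_lt_succAbove_iff.mp hpq)

lemma avoid_or_eq {α : Type*} {a b p q : α} (hab : a ≠ b) :
    (p ≠ a ∧ q ≠ a) ∨ (p ≠ b ∧ q ≠ b) ∨ (p = a ∧ q = b) ∨ (p = b ∧ q = a) := by
  grind

lemma edgSet_eq_union_faces {m : ℕ} (τ : Fin (m + 1) → V) {a b : Fin (m + 1)} (hba : b < a) :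
    EdgSet τ = EdgSet (τ ∘ a.succAbove) ∪ EdgSet (τ ∘ b.succAbove) ∪ {(τ b, τ a)} := by
  ext x
  constructor
  · rintro ⟨p, q, hpq, rfl⟩
    rcases avoid_or_eq (p := p) (q := q) hba.ne' with
      ⟨hp, hq⟩ | ⟨hp, hq⟩ | ⟨rfl, rfl⟩ | ⟨rfl, rfl⟩
    · exact .inl (.inl (mk_mem_edgSet_comp_succAbove τ hpq hp hq))
    · exact .inl (.inr (mk_mem_edgSet_comp_succAbove τ hpq hp hq))
    · exact absurd (hpq.trans hba) (lt_irrefl _)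
    · exact .inr rfl
  · rintro ((hx | hx) | rfl)
    · exact edgSet_comp_succAbove_subset τ a hx
    · exact edgSet_comp_succAbove_subset τ b hx
    · exact mk_mem_edgSet τ hba

lemma injective_of_injective_comp_succAbove {m : ℕ} {τ : Fin (m + 1) → V} {a b : Fin (m + 1)}
    (ha : Injective (τ ∘ a.succAbove)) (hb : Injective (τ ∘ b.succAbove)) (hab : τ a ≠ τ b) :
    Injective τ := by
  have hab' : a ≠ b := fun h => hab (congrArg τ h)
  intro p q hpq
  rcases avoid_or_eq (p := p) (q := q) hab' with
    ⟨hp, hq⟩ | ⟨hp, hq⟩ | ⟨rfl, rfl⟩ | ⟨rfl, rfl⟩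
  · exact Fin.eq_of_apply_eq_of_injective_comp_succAbove ha hp hq hpq
  · exact Fin.eq_of_apply_eq_of_injective_comp_succAbove hb hp hq hpq
  · exact absurd hpq hab
  · exact absurd hpq.symm hab

end EdgSet

section IsSimplex

variable {V : Type*}

lemma isSimplex_edgSet {m : ℕ} {τ : Fin m → V} (hτ : Injective τ) :
    IsSimplex (fun x y => (x, y) ∈ EdgSet τ) τ :=
  ⟨hτ, fun _ _ => mk_mem_edgSet τ⟩

lemma eq_of_isSimplex_edgSet {m : ℕ} {τ₀ τ : Fin (m + 2) → V} (h₀ : Injective τ₀)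
    (hτ : IsSimplex (fun x y => (x, y) ∈ EdgSet τ₀) τ) : τ = τ₀ := by
  have h_range : ∀ p, ∃ q, τ₀ q = τ p := by
    intro p
    obtain ⟨r, hrp⟩ := exists_ne p
    rcases hrp.lt_or_gt with h | h
    · obtain ⟨_, j, _, he⟩ := hτ.2 r p h
      exact ⟨j, (Prod.ext_iff.mp he).2.symm⟩
    · obtain ⟨i, _, _, he⟩ := hτ.2 p r h
      exact ⟨i, (Prod.ext_iff.mp he).1.symm⟩
  choose g hg using h_range
  have hg_mono : StrictMono g := by
    intro p q hpq
    obtain ⟨i, j, hij, he⟩ := hτ.2 p q hpq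
    rw [← hg p, ← hg q, Prod.mk.injEq] at he
    rwa [h₀ he.1, h₀ he.2]
  funext p
  rw [← hg p, hg_mono.eq_id, id]

theorem existsUnique_isSimplex_edgSet {m : ℕ} {τ₀ : Fin (m + 2) → V} (h₀ : Injective τ₀) :
    ∃! τ : Fin (m + 2) → V, IsSimplex (fun x y => (x, y) ∈ EdgSet τ₀) τ :=
  ⟨τ₀, isSimplex_edgSet h₀, fun _ hτ => eq_of_isSimplex_edgSet h₀ hτ⟩

end IsSimplex

section Completion

variable {V : Type*} {m : ℕ} {σ σ' : Fin (m + 1) → V} {i i' : Fin (m + 1)}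

lemma insertNth_comp_succAbove_castSucc (hii : i ≤ i')
    (hc : σ ∘ i.succAbove = σ' ∘ i'.succAbove) :
    Fin.insertNth i'.succ (σ' i') σ ∘ i.castSucc.succAbove = σ' := by
  funext j
  induction j using Fin.succAboveCases i' with
  | x =>
    rw [comp_apply, Fin.succAbove_of_le_castSucc _ _ (Fin.castSucc_le_castSucc_iff.mpr hii),
      Fin.insertNth_apply_same]
  | p k =>
    rw [comp_apply, Fin.castSucc_succAbove_succAbove hii, Fin.insertNth_apply_succAbove]
    exact congrFun hc k

theorem existsUnique_isSimplex_of_common_face (hσ : Injective σ) (hσ' : Injective σ')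
    (hii : i ≤ i') (hc : σ ∘ i.succAbove = σ' ∘ i'.succAbove) (hne : σ i ≠ σ' i') :
    ∃! τ : Fin (m + 2) → V,
      IsSimplex (fun x y => (x, y) ∈ EdgSet σ ∪ EdgSet σ' ∪ {(σ i, σ' i')}) τ := by
  set τ₀ : Fin (m + 2) → V := Fin.insertNth i'.succ (σ' i') σ
  have hlt : i.castSucc < i'.succ := Fin.castSucc_lt_succ_iff.mpr hii
  have hface : τ₀ ∘ i'.succ.succAbove = σ := Fin.insertNth_comp_succAbove i'.succ (σ' i') σ
  have hface' : τ₀ ∘ i.castSucc.succAbove = σ' := insertNth_comp_succAbove_castSucc hii hc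
  have hτ₀i : τ₀ i.castSucc = σ i := by
    rw [← Fin.succAbove_of_castSucc_lt _ _ hlt]
    exact Fin.insertNth_apply_succAbove _ _ _ _
  have hτ₀i' : τ₀ i'.succ = σ' i' := Fin.insertNth_apply_same _ _ _
  have hedges : EdgSet σ ∪ EdgSet σ' ∪ {(σ i, σ' i')} = EdgSet τ₀ := by
    rw [edgSet_eq_union_faces τ₀ hlt, hface, hface', hτ₀i, hτ₀i']
  have hτ₀ : Injective τ₀ := by
    refine injective_of_injective_comp_succAbove (hface ▸ hσ) (hface' ▸ hσ') ?_
    rw [hτ₀i, hτ₀i']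
    exact hne.symm
  rw [hedges]
  exact existsUnique_isSimplex_edgSet hτ₀

end Completion

theorem almost_simplex_unique_completion_general {V : Type*}
    (E : V → V → Prop)
    (n : ℕ) (σ σ' : Fin (n + 2) → V) (e : V × V)
    (h : IsAlmostSimplex E σ σ' e) :
    ∃! τ : Fin (n + 3) → V,
      IsSimplex (fun a b => (a, b) ∈ EdgSet σ ∪ EdgSet σ' ∪ {e}) τ := by
  obtain ⟨⟨hσ, -⟩, ⟨hσ', -⟩, i, i', hc, hne, ⟨hii, rfl⟩ | ⟨hii, rfl⟩⟩ := h
  · exact existsUnique_isSimplex_of_common_face hσ hσ' hii hc hne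
  · rw [Set.union_comm (EdgSet σ)]
    exact existsUnique_isSimplex_of_common_face hσ' hσ hii hc.symm hne.symm

/-- **Lemma 1.** An almost-`d`-simplex `({σ, σ'}, e)` (with `d = n+2 ≥ 2`) in a simple
directed graph completes, after adding the missing edge `e` to `Edg(σ) ∪ Edg(σ')`,
to exactly one `d`-simplex. -/
theorem almost_simplex_unique_completion {V : Type*} [Fintype V]
    (E : V → V → Prop) (hE : Irreflexive E)
    (n : ℕ) (σ σ' : Fin (n + 2) → V) (e : V × V)
    (h : IsAlmostSimplex E σ σ' e) :
    ∃! τ : Fin (n + 3) → V,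
      IsSimplex (fun a b => (a, b) ∈ EdgSet σ ∪ EdgSet σ' ∪ {e}) τ :=
  almost_simplex_unique_completion_general E n σ σ' e h
end

section
/- Let σ̄ be a d-simplex (d ≥ 2) in a simple directed graph G. Then there are exactly C(d+1, 2) = (d² + d)/2 almost-d-simplices contained in σ̄ which complete to σ̄; more precisely, the almost-d-simplices ({σ, σ'}, e) with σ, σ' faces of σ̄ whose unique completion (by Lemma 1) is σ̄ are in bijection with the C(d+1, 2) edges of σ̄ via ({σ, σ'}, e) ↦ e. -/
/-!
The edges of `σ`, `σ'` and the pair `e` number at most `2·C(d,2) − C(d−1,2) + 1 = C(d+1,2)`,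
since `σ` and `σ'` share a `(d−2)`-face; this is exactly the number of edges of a completion `σ̄`,
so every edge of `σ` is an edge of `σ̄`, which forces `σ = σ̄ ∘ δ_k` (and likewise
`σ' = σ̄ ∘ δ_k'`). The common face then gives `δ_k ∘ δ_i = δ_k' ∘ δ_i'`, i.e.
`{k, δ_k i} = {k', δ_k' i'}`, so the extra vertices of `σ` and `σ'` are `σ̄ k'` and `σ̄ k`, and `e`
is the edge of `σ̄` joining them. Conversely, every edge `(σ̄ i, σ̄ j)` arises from the two facets
opposite `j` and `i`.
-/

namespace Fin

theorem range_succAbove_comp_succAbove {m : ℕ} (p : Fin (m + 2)) (q : Fin (m + 1)) :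
    Set.range (p.succAbove ∘ q.succAbove) = {p, p.succAbove q}ᶜ := by
  rw [Set.range_comp, range_succAbove,
    Set.image_compl_eq_range_sdiff_image succAbove_right_injective, range_succAbove,
    Set.image_singleton, Set.compl_eq_univ_sdiff, Set.sdiff_sdiff, Set.singleton_union,
    ← Set.compl_eq_univ_sdiff]

theorem exists_eq_succAbove_of_strictMono {m : ℕ} {f : Fin (m + 1) → Fin (m + 2)}
    (hf : StrictMono f) : ∃ k : Fin (m + 2), f = k.succAbove := by
  obtain ⟨k, hk⟩ : ∃ k, k ∉ Set.range f := by
    by_contra! h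
    simpa using Fintype.card_le_of_surjective f h
  refine ⟨k, (hf.range_inj (strictMono_succAbove k)).1 ?_⟩
  have hsub : Set.range f ⊆ Set.range k.succAbove := by
    rw [range_succAbove]
    rintro _ hx rfl
    exact hk hx
  refine Set.eq_of_subset_of_ncard_le hsub ?_ (Set.toFinite _)
  rw [Set.ncard_range_of_injective hf.injective,
    Set.ncard_range_of_injective succAbove_right_injective]

theorem succAbove_eq_and_succAbove_eq_of_comp_eq {m : ℕ} {k k' : Fin (m + 2)}
    {i i' : Fin (m + 1)} (h : k.succAbove ∘ i.succAbove = k'.succAbove ∘ i'.succAbove)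
    (hne : k.succAbove i ≠ k'.succAbove i') : k.succAbove i = k' ∧ k'.succAbove i' = k := by
  have hrange := congrArg Set.range h
  rw [range_succAbove_comp_succAbove, range_succAbove_comp_succAbove, compl_inj_iff,
    Set.pair_eq_pair_iff] at hrange
  rcases hrange with ⟨-, h'⟩ | ⟨hk, hk'⟩
  · exact absurd h' hne
  · exact ⟨hk', hk.symm⟩

end Fin

section EdgSet

variable {V : Type*}

theorem edgSet_eq_image {m : ℕ} (σ : Fin m → V) :
    EdgSet σ = Prod.map σ σ '' {p : Fin m × Fin m | p.1 < p.2} := by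
  ext x
  constructor
  · rintro ⟨i, j, hij, rfl⟩
    exact ⟨(i, j), hij, rfl⟩
  · rintro ⟨⟨i, j⟩, hij, rfl⟩
    exact ⟨i, j, hij, rfl⟩

theorem edgSet_finite {m : ℕ} (σ : Fin m → V) : (EdgSet σ).Finite := by
  rw [edgSet_eq_image]
  exact Set.toFinite _ |>.image _

theorem ncard_edgSet {m : ℕ} {σ : Fin m → V} (hσ : Function.Injective σ) :
    (EdgSet σ).ncard = m.choose 2 := by
  rw [edgSet_eq_image, Set.ncard_image_of_injective _ (hσ.prodMap hσ)]
  simpa [← Set.ncard_coe_finset] using Fintype.card_product_filter_lt (α := Fin m)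

theorem edgSet_comp_subset {k m : ℕ} (σ : Fin m → V) {f : Fin k → Fin m} (hf : StrictMono f) :
    EdgSet (σ ∘ f) ⊆ EdgSet σ := by
  rintro _ ⟨i, j, hij, rfl⟩
  exact ⟨f i, f j, hf hij, rfl⟩

theorem mem_edgSet_comp_succAbove {m : ℕ} (σ : Fin (m + 1) → V) {k a b : Fin (m + 1)}
    (hab : a < b) (ha : a ≠ k) (hb : b ≠ k) : (σ a, σ b) ∈ EdgSet (σ ∘ k.succAbove) := by
  obtain ⟨a', rfl⟩ := Fin.exists_succAbove_eq ha
  obtain ⟨b', rfl⟩ := Fin.exists_succAbove_eq hb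
  exact ⟨a', b', (Fin.strictMono_succAbove k).lt_iff_lt.1 hab, rfl⟩

theorem IsSimplex.comp_strictMono {E : V → V → Prop} {k m : ℕ} {σ : Fin m → V}
    (hσ : IsSimplex E σ) {f : Fin k → Fin m} (hf : StrictMono f) : IsSimplex E (σ ∘ f) :=
  ⟨hσ.1.comp hf.injective, fun _ _ hij => hσ.2 _ _ (hf hij)⟩

theorem exists_strictMono_of_edgSet_subset {k m : ℕ} {σ : Fin (m + 2) → V} {τ : Fin k → V}
    (hτ : Function.Injective τ) (h : EdgSet σ ⊆ EdgSet τ) :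
    ∃ f : Fin (m + 2) → Fin k, StrictMono f ∧ σ = τ ∘ f := by
  have hrange : ∀ a, ∃ p, τ p = σ a := by
    intro a
    obtain ⟨b, hba⟩ := exists_ne a
    rcases hba.lt_or_gt with hba | hab
    · obtain ⟨_, q, -, hq⟩ := h ⟨b, a, hba, rfl⟩
      exact ⟨q, (Prod.ext_iff.1 hq).2.symm⟩
    · obtain ⟨p, _, -, hp⟩ := h ⟨a, b, hab, rfl⟩
      exact ⟨p, (Prod.ext_iff.1 hp).1.symm⟩
  choose f hf using hrange
  refine ⟨f, fun a b hab => ?_, funext fun a => (hf a).symm⟩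
  obtain ⟨p, q, hpq, hσ⟩ := h ⟨a, b, hab, rfl⟩
  obtain ⟨hp, hq⟩ := Prod.ext_iff.1 hσ
  rwa [hτ ((hf a).trans hp), hτ ((hf b).trans hq)]

theorem exists_eq_comp_succAbove_of_edgSet_subset {m : ℕ} {σ : Fin (m + 2) → V}
    {τ : Fin (m + 3) → V} (hτ : Function.Injective τ) (h : EdgSet σ ⊆ EdgSet τ) :
    ∃ k : Fin (m + 3), σ = τ ∘ k.succAbove := by
  obtain ⟨f, hf, rfl⟩ := exists_strictMono_of_edgSet_subset hτ h
  obtain ⟨k, rfl⟩ := Fin.exists_eq_succAbove_of_strictMono hf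
  exact ⟨k, rfl⟩

end EdgSet

section Completion

variable {V : Type*}

theorem edgSet_eq_union_of_subset {n : ℕ} {σ σ' : Fin (n + 2) → V} {σbar : Fin (n + 3) → V}
    {e : V × V} (hσ : Function.Injective σ) (hσ' : Function.Injective σ') {i i' : Fin (n + 2)}
    (hface : σ ∘ i.succAbove = σ' ∘ i'.succAbove) (hσbar : Function.Injective σbar)
    (h : EdgSet σbar ⊆ EdgSet σ ∪ EdgSet σ' ∪ {e}) :
    EdgSet σbar = EdgSet σ ∪ EdgSet σ' ∪ {e} := by
  have hinter : EdgSet (σ ∘ i.succAbove) ⊆ EdgSet σ ∩ EdgSet σ' :=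
    Set.subset_inter (edgSet_comp_subset σ (Fin.strictMono_succAbove i))
      (hface ▸ edgSet_comp_subset σ' (Fin.strictMono_succAbove i'))
  have hunion := Set.ncard_union_add_ncard_inter _ _ (edgSet_finite σ) (edgSet_finite σ')
  have hface_le := Set.ncard_le_ncard hinter ((edgSet_finite σ).inter_of_left _)
  have hinsert := Set.ncard_insert_le e (EdgSet σ ∪ EdgSet σ')
  rw [ncard_edgSet hσ, ncard_edgSet hσ'] at hunion
  rw [ncard_edgSet (hσ.comp Fin.succAbove_right_injective)] at hface_le
  refine Set.eq_of_subset_of_ncard_le h ?_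
    (((edgSet_finite σ).union (edgSet_finite σ')).union (Set.finite_singleton e))
  rw [Set.union_singleton, ncard_edgSet hσbar]
  have h₁ : (n + 3).choose 2 = (n + 2).choose 1 + (n + 2).choose 2 := Nat.choose_succ_succ' _ _
  have h₂ : (n + 2).choose 2 = (n + 1).choose 1 + (n + 1).choose 2 := Nat.choose_succ_succ' _ _
  rw [Nat.choose_one_right] at h₁ h₂
  omega

def completingAlmostSimplices (E : V → V → Prop) {n : ℕ} (σbar : Fin (n + 3) → V) :
    Set (Sym2 (Fin (n + 2) → V) × (V × V)) :=
  {x | ∃ σ σ', x.1 = s(σ, σ') ∧ IsAlmostSimplex E σ σ' x.2 ∧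
    IsSimplex (fun a b => (a, b) ∈ EdgSet σ ∪ EdgSet σ' ∪ {x.2}) σbar}

def almostSimplexOfEdge {m : ℕ} (σbar : Fin (m + 1) → V) (i j : Fin (m + 1)) :
    Sym2 (Fin m → V) × (V × V) :=
  (s(σbar ∘ j.succAbove, σbar ∘ i.succAbove), (σbar i, σbar j))

theorem almostSimplexOfEdge_mem_completingAlmostSimplices {E : V → V → Prop} {n : ℕ}
    {σbar : Fin (n + 3) → V} (hσbar : IsSimplex E σbar) {i j : Fin (n + 3)} (hij : i < j) :
    almostSimplexOfEdge σbar i j ∈ completingAlmostSimplices E σbar := by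
  set q := i.castPred (Fin.ne_last_of_lt hij)
  have hq : j.succAbove q = i := Fin.succAbove_castPred_of_lt _ _ hij
  have hq' : i.succAbove (q.predAbove j) = j := hq ▸ Fin.succAbove_succAbove_predAbove j q
  have hface : σbar ∘ j.succAbove ∘ q.succAbove =
      σbar ∘ i.succAbove ∘ (q.predAbove j).succAbove := by
    funext k
    simp only [Function.comp_apply]
    rw [← Fin.succAbove_succAbove_succAbove_predAbove j q k, hq]
  have hle : q ≤ q.predAbove j := by
    rw [Fin.predAbove_of_castSucc_lt _ _ (by simpa [q] using hij), Fin.le_def]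
    simp only [q, Fin.coe_castPred, Fin.val_pred]
    omega
  refine ⟨σbar ∘ j.succAbove, σbar ∘ i.succAbove, rfl,
    ⟨hσbar.comp_strictMono (Fin.strictMono_succAbove j),
      hσbar.comp_strictMono (Fin.strictMono_succAbove i), q, q.predAbove j, hface, ?_,
      Or.inl ⟨hle, ?_⟩⟩, hσbar.1, fun a b hab => ?_⟩
  · simpa [hq, hq'] using hσbar.1.ne hij.ne
  · simp [almostSimplexOfEdge, hq, hq']
  by_cases hj : a ≠ j ∧ b ≠ j
  · exact Or.inl (Or.inl (mem_edgSet_comp_succAbove σbar hab hj.1 hj.2))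
  by_cases hi : a ≠ i ∧ b ≠ i
  · exact Or.inl (Or.inr (mem_edgSet_comp_succAbove σbar hab hi.1 hi.2))
  obtain ⟨rfl, rfl⟩ : a = i ∧ b = j := by grind
  exact Or.inr rfl

theorem exists_almostSimplexOfEdge_eq_of_mem {E : V → V → Prop} {n : ℕ}
    {σbar : Fin (n + 3) → V} (hσbar : Function.Injective σbar)
    {x : Sym2 (Fin (n + 2) → V) × (V × V)}
    (hx : x ∈ completingAlmostSimplices E σbar) :
    ∃ i j, i < j ∧ almostSimplexOfEdge σbar i j = x := by
  obtain ⟨s, e⟩ := x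
  obtain ⟨σ, σ', rfl, ⟨hσ, hσ', i, i', hface, hne, he⟩, -, hcomp⟩ := hx
  have hEdg : EdgSet σbar = EdgSet σ ∪ EdgSet σ' ∪ {e} :=
    edgSet_eq_union_of_subset hσ.1 hσ'.1 hface hσbar fun _ ⟨a, b, hab, h⟩ => h ▸ hcomp a b hab
  obtain ⟨k, rfl⟩ := exists_eq_comp_succAbove_of_edgSet_subset hσbar
    (hEdg ▸ Set.subset_union_left.trans Set.subset_union_left)
  obtain ⟨k', rfl⟩ := exists_eq_comp_succAbove_of_edgSet_subset hσbar
    (hEdg ▸ Set.subset_union_right.trans Set.subset_union_left)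
  obtain ⟨hk, hk'⟩ := Fin.succAbove_eq_and_succAbove_eq_of_comp_eq (hσbar.comp_left hface)
    fun h => hne (congrArg σbar h)
  obtain ⟨p, q, hpq, rfl⟩ : e ∈ EdgSet σbar := hEdg ▸ Or.inr rfl
  simp only [Function.comp_apply, hk, hk', Prod.mk.injEq, hσbar.eq_iff] at he
  rcases he with ⟨-, rfl, rfl⟩ | ⟨-, rfl, rfl⟩
  · exact ⟨p, q, hpq, rfl⟩
  · exact ⟨p, q, hpq, by simp [almostSimplexOfEdge, Sym2.eq_swap]⟩

theorem completingAlmostSimplices_eq_image {E : V → V → Prop} {n : ℕ}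
    {σbar : Fin (n + 3) → V} (hσbar : IsSimplex E σbar) :
    completingAlmostSimplices E σbar =
      (fun p : Fin (n + 3) × Fin (n + 3) => almostSimplexOfEdge σbar p.1 p.2) ''
        {p | p.1 < p.2} := by
  ext x
  constructor
  · intro hx
    obtain ⟨i, j, hij, rfl⟩ := exists_almostSimplexOfEdge_eq_of_mem hσbar.1 hx
    exact ⟨(i, j), hij, rfl⟩
  · rintro ⟨⟨i, j⟩, hij, rfl⟩
    exact almostSimplexOfEdge_mem_completingAlmostSimplices hσbar hij

theorem bijOn_snd_completingAlmostSimplices {E : V → V → Prop} {n : ℕ}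
    {σbar : Fin (n + 3) → V} (hσbar : IsSimplex E σbar) :
    Set.BijOn Prod.snd (completingAlmostSimplices E σbar) (EdgSet σbar) := by
  have hinj : Set.InjOn (Prod.snd ∘ fun p : Fin (n + 3) × Fin (n + 3) =>
      almostSimplexOfEdge σbar p.1 p.2) {p | p.1 < p.2} :=
    (hσbar.1.prodMap hσbar.1).injOn
  rw [completingAlmostSimplices_eq_image hσbar, edgSet_eq_image]
  have hbij := hinj.image_of_comp.bijOn_image
  rwa [Set.image_image] at hbij

end Completion

theorem almost_simplices_completing_to_simplex_general {V : Type*}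
    (E : V → V → Prop)
    (n : ℕ) (σbar : Fin (n + 3) → V) (hσbar : IsSimplex E σbar) :
    Set.BijOn Prod.snd
      {x : Sym2 (Fin (n + 2) → V) × (V × V) |
        ∃ σ σ', x.1 = s(σ, σ') ∧ IsAlmostSimplex E σ σ' x.2 ∧
          IsSimplex (fun a b => (a, b) ∈ EdgSet σ ∪ EdgSet σ' ∪ {x.2}) σbar}
      (EdgSet σbar) ∧
    {x : Sym2 (Fin (n + 2) → V) × (V × V) |
        ∃ σ σ', x.1 = s(σ, σ') ∧ IsAlmostSimplex E σ σ' x.2 ∧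
          IsSimplex (fun a b => (a, b) ∈ EdgSet σ ∪ EdgSet σ' ∪ {x.2}) σbar}.ncard
      = Nat.choose (n + 3) 2 ∧
    (EdgSet σbar).ncard = Nat.choose (n + 3) 2 := by
  have hbij := bijOn_snd_completingAlmostSimplices hσbar
  have hcard : (EdgSet σbar).ncard = (n + 3).choose 2 := ncard_edgSet hσbar.1
  exact ⟨hbij, hbij.ncard_eq.trans hcard, hcard⟩

/-- **Lemma 2.** Let `σ̄` be a `d`-simplex (`d = n+2 ≥ 2`) in a simple directed graph.
The almost-`d`-simplices `({σ, σ'}, e)` (encoded as an unordered pair in `Sym2` together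
with the missing pair `e`) whose unique completion is `σ̄` — i.e. such that `σ̄` is a
simplex of the graph with edges `Edg(σ) ∪ Edg(σ') ∪ {e}` — are in bijection with the
edges of `σ̄` via `({σ, σ'}, e) ↦ e`; in particular there are exactly
`C(d+1, 2) = (d² + d)/2` of them. -/
theorem almost_simplices_completing_to_simplex {V : Type*} [Fintype V]
    (E : V → V → Prop) (hE : Irreflexive E)
    (n : ℕ) (σbar : Fin (n + 3) → V) (hσbar : IsSimplex E σbar) :
    Set.BijOn Prod.snd
      {x : Sym2 (Fin (n + 2) → V) × (V × V) |
        ∃ σ σ', x.1 = s(σ, σ') ∧ IsAlmostSimplex E σ σ' x.2 ∧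
          IsSimplex (fun a b => (a, b) ∈ EdgSet σ ∪ EdgSet σ' ∪ {x.2}) σbar}
      (EdgSet σbar) ∧
    {x : Sym2 (Fin (n + 2) → V) × (V × V) |
        ∃ σ σ', x.1 = s(σ, σ') ∧ IsAlmostSimplex E σ σ' x.2 ∧
          IsSimplex (fun a b => (a, b) ∈ EdgSet σ ∪ EdgSet σ' ∪ {x.2}) σbar}.ncard
      = Nat.choose (n + 3) 2 ∧
    (EdgSet σbar).ncard = Nat.choose (n + 3) 2 :=
  almost_simplices_completing_to_simplex_general E n σbar hσbar
end

section
/- Let ({σ, σ'}, e) be an almost-d-simplex (d ≥ 2) in a simple directed graph, with e = (e_1, e_2). Then for every i ∈ {1, …, d}, the subgraph with vertices Ver(σ) ∪ Ver(σ') and edges Edg(σ) ∪ Edg(σ') contains exactly C(d−1, i−1) almost-i-simplices whose missing pair is (e_1, e_2); that is, there are exactly C(d−1, i−1) almost-i-simplices ({σ_1, σ_2}, (e_1, e_2)) with σ_1, σ_2 faces of σ respectively σ'. -/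
/-- `τ` is a face of `σ`: an order-preserving subtuple. -/
def IsFace {V : Type*} {k m : ℕ} (τ : Fin k → V) (σ : Fin m → V) : Prop :=
  ∃ f : Fin k → Fin m, StrictMono f ∧ τ = σ ∘ f

namespace AlmostAux

lemma val_succAbove {N : ℕ} (j : Fin (N + 1)) (m : Fin N) :
    ((j.succAbove m : Fin (N + 1)) : ℕ) = if (m : ℕ) < (j : ℕ) then (m : ℕ) else (m : ℕ) + 1 := by
  rcases lt_or_ge (m.castSucc) j with h | h
  · rw [Fin.succAbove_of_castSucc_lt _ _ h, if_pos]
    · rfl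
    · simpa [Fin.lt_def] using h
  · rw [Fin.succAbove_of_le_castSucc _ _ h, if_neg]
    · rfl
    · simp only [Fin.le_def, Fin.coe_castSucc] at h
      omega

lemma succAbove_lt_self_iff {N : ℕ} (j : Fin (N + 1)) (m : Fin N) :
    j.succAbove m < j ↔ (m : ℕ) < (j : ℕ) := by
  rw [Fin.lt_def, val_succAbove]
  split_ifs with h
  · simp [h]
  · omega

lemma cut_iff {k N t : ℕ} {q : Fin k → Fin N} (hq : StrictMono q) (m : Fin k) :
    (m : ℕ) < (Finset.univ.filter fun m => ((q m : ℕ) < t)).card ↔ (q m : ℕ) < t := by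
  constructor
  · intro hm
    by_contra hqm
    have hsub : (Finset.univ.filter fun m => ((q m : ℕ) < t)) ⊆ Finset.Iio m := by
      intro s hs
      simp only [Finset.mem_filter, Finset.mem_univ, true_and] at hs
      rw [Finset.mem_Iio]
      by_contra hsm
      push_neg at hsm
      exact hqm (lt_of_le_of_lt (Fin.le_def.mp (hq.monotone hsm)) hs)
    have := Finset.card_le_card hsub
    rw [Fin.card_Iio] at this
    omega
  · intro h
    have hsub : Finset.Iic m ⊆ (Finset.univ.filter fun m => ((q m : ℕ) < t)) := by
      intro s hs
      simp only [Finset.mem_filter, Finset.mem_univ, true_and]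
      exact lt_of_le_of_lt (Fin.le_def.mp (hq.monotone (Finset.mem_Iic.mp hs))) h
    have := Finset.card_le_card hsub
    rw [Fin.card_Iic] at this
    omega

lemma cut_unique {k : ℕ} {c₁ c₂ : ℕ} (h₁ : c₁ ≤ k) (h₂ : c₂ ≤ k) {p : Fin k → Prop}
    (H₁ : ∀ m : Fin k, (m : ℕ) < c₁ ↔ p m) (H₂ : ∀ m : Fin k, (m : ℕ) < c₂ ↔ p m) : c₁ = c₂ := by
  by_contra hne
  rcases Nat.lt_or_ge c₁ c₂ with h | h
  · have hp := (H₂ ⟨c₁, by omega⟩).mp (by simpa using h)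
    have := (H₁ ⟨c₁, by omega⟩).mpr hp
    simp at this
  · have hlt : c₂ < c₁ := by omega
    have hp := (H₁ ⟨c₂, by omega⟩).mp (by simpa using hlt)
    have := (H₂ ⟨c₂, by omega⟩).mpr hp
    simp at this


lemma insertNth_strictMono {N k : ℕ} {j : Fin (k + 1)} {x : Fin N} {p : Fin k → Fin N}
    (hp : StrictMono p) (h : ∀ m : Fin k, if (m : ℕ) < (j : ℕ) then p m < x else x < p m) :
    StrictMono (j.insertNth x p) := by
  intro m₁ m₂ hlt
  rcases eq_or_ne m₁ j with rfl | h1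
  · obtain ⟨z, rfl⟩ := Fin.exists_succAbove_eq (show m₂ ≠ m₁ from hlt.ne')
    rw [Fin.insertNth_apply_same, Fin.insertNth_apply_succAbove]
    have hz : ¬ ((z : ℕ) < (m₁ : ℕ)) := by
      have hv := val_succAbove m₁ z
      have := Fin.lt_def.mp hlt
      by_contra hc
      rw [if_pos hc] at hv
      omega
    have := h z
    rwa [if_neg hz] at this
  · obtain ⟨z₁, rfl⟩ := Fin.exists_succAbove_eq h1
    rcases eq_or_ne m₂ j with rfl | h2
    · rw [Fin.insertNth_apply_same, Fin.insertNth_apply_succAbove]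
      have hz : (z₁ : ℕ) < (m₂ : ℕ) := by
        have hv := val_succAbove m₂ z₁
        have := Fin.lt_def.mp hlt
        by_contra hc
        rw [if_neg hc] at hv
        omega
      have := h z₁
      rwa [if_pos hz] at this
    · obtain ⟨z₂, rfl⟩ := Fin.exists_succAbove_eq h2
      rw [Fin.insertNth_apply_succAbove, Fin.insertNth_apply_succAbove]
      exact hp (Fin.succAbove_lt_succAbove_iff.mp hlt)

def jdx {k n : ℕ} (q : Fin k → Fin (n + 1)) (t : Fin (n + 2)) : Fin (k + 1) :=
  ⟨(Finset.univ.filter fun m => ((q m : ℕ) < (t : ℕ))).card, by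
    have h := Finset.card_filter_le (Finset.univ : Finset (Fin k))
      (fun m => ((q m : ℕ) < (t : ℕ)))
    simp only [Finset.card_univ, Fintype.card_fin] at h
    omega⟩

def fdx {k n : ℕ} (q : Fin k → Fin (n + 1)) (t : Fin (n + 2)) : Fin (k + 1) → Fin (n + 2) :=
  (jdx q t).insertNth t (t.succAbove ∘ q)

def bld {V : Type*} {k n : ℕ} (τ : Fin (n + 1) → V) (x : V) (q : Fin k → Fin (n + 1))
    (t : Fin (n + 2)) : Fin (k + 1) → V :=
  (jdx q t).insertNth x (τ ∘ q)

lemma bld_same {V : Type*} {k n : ℕ} (τ : Fin (n + 1) → V) (x : V) (q : Fin k → Fin (n + 1))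
    (t : Fin (n + 2)) : bld τ x q t (jdx q t) = x :=
  Fin.insertNth_apply_same _ _ _

lemma bld_succAbove {V : Type*} {k n : ℕ} (τ : Fin (n + 1) → V) (x : V)
    (q : Fin k → Fin (n + 1)) (t : Fin (n + 2)) (m : Fin k) :
    bld τ x q t ((jdx q t).succAbove m) = τ (q m) :=
  Fin.insertNth_apply_succAbove _ _ _ _

lemma fdx_strictMono {k n : ℕ} {q : Fin k → Fin (n + 1)} (hq : StrictMono q)
    (t : Fin (n + 2)) : StrictMono (fdx q t) := by
  apply insertNth_strictMono (fun _ _ h => Fin.succAbove_lt_succAbove_iff.mpr (hq h))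
  intro m
  have hcut := cut_iff (t := (t : ℕ)) hq m
  have hv := val_succAbove t (q m)
  show if (m : ℕ) < ((jdx q t) : ℕ) then _ else _
  split_ifs with h
  · rw [Fin.lt_def]
    have hlt : (q m : ℕ) < (t : ℕ) := hcut.mp h
    rw [hv, if_pos hlt]
    exact hlt
  · rw [Fin.lt_def]
    have hlt : ¬ ((q m : ℕ) < (t : ℕ)) := fun hc => h (hcut.mpr hc)
    rw [hv, if_neg hlt]
    omega

lemma comp_fdx {V : Type*} {k n : ℕ} (ρ : Fin (n + 2) → V) (q : Fin k → Fin (n + 1))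
    (t : Fin (n + 2)) : ρ ∘ fdx q t = bld (ρ ∘ t.succAbove) (ρ t) q t := by
  funext m
  rcases eq_or_ne m (jdx q t) with rfl | hm
  · show ρ (fdx q t (jdx q t)) = _
    rw [bld_same]
    unfold fdx
    rw [Fin.insertNth_apply_same]
  · obtain ⟨p, rfl⟩ := Fin.exists_succAbove_eq hm
    show ρ (fdx q t ((jdx q t).succAbove p)) = _
    rw [bld_succAbove]
    unfold fdx
    rw [Fin.insertNth_apply_succAbove]
    rfl

lemma bld_cases {V : Type*} {k n : ℕ} (τ : Fin (n + 1) → V) (x : V) (q : Fin k → Fin (n + 1))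
    (t : Fin (n + 2)) (m : Fin (k + 1)) :
    (m = jdx q t ∧ bld τ x q t m = x) ∨ ∃ p, bld τ x q t m = τ (q p) := by
  rcases eq_or_ne m (jdx q t) with rfl | hm
  · exact Or.inl ⟨rfl, bld_same _ _ _ _⟩
  · obtain ⟨p, rfl⟩ := Fin.exists_succAbove_eq hm
    exact Or.inr ⟨p, bld_succAbove _ _ _ _ _⟩

lemma ncard_strictMono_set (k N : ℕ) :
    {q : Fin k → Fin N | StrictMono q}.ncard = Nat.choose N k := by
  classical
  have hinj : Set.InjOn (fun q : Fin k → Fin N => Finset.image q Finset.univ)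
      {q | StrictMono q} := by
    intro q hq q' hq' hQQ
    have hr : Set.range q = Set.range q' := by
      rw [← Set.image_univ, ← Set.image_univ, ← Finset.coe_univ, ← Finset.coe_image,
        ← Finset.coe_image]
      exact congrArg _ hQQ
    exact (hq.range_inj hq').mp hr
  have himg : (fun q : Fin k → Fin N => Finset.image q Finset.univ) '' {q | StrictMono q}
      = ↑(Finset.powersetCard k (Finset.univ : Finset (Fin N))) := by
    ext P
    simp only [Set.mem_image, Set.mem_setOf_eq, Finset.mem_coe, Finset.mem_powersetCard]
    constructor
    · rintro ⟨q, hq, rfl⟩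
      exact ⟨Finset.subset_univ _, by
        rw [Finset.card_image_of_injective _ hq.injective, Finset.card_univ, Fintype.card_fin]⟩
    · rintro ⟨-, hcard⟩
      refine ⟨⇑(P.orderEmbOfFin hcard), (P.orderEmbOfFin hcard).strictMono, ?_⟩
      apply Finset.coe_injective
      rw [Finset.coe_image, Finset.coe_univ, Set.image_univ, Finset.range_orderEmbOfFin]
  rw [← Set.ncard_image_of_injOn hinj, himg, Set.ncard_coe_finset, Finset.card_powersetCard,
    Finset.card_univ, Fintype.card_fin]


lemma core {V : Type*} {n : ℕ} {σ σ' : Fin (n + 2) → V}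
    (hσ : Function.Injective σ) (hσ' : Function.Injective σ')
    {i i' : Fin (n + 2)} (hττ : σ ∘ i.succAbove = σ' ∘ i'.succAbove)
    (hab : σ i ≠ σ' i') (hii' : i ≤ i') (k : ℕ) :
    {x : Sym2 (Fin (k + 1) → V) |
      ∃ σ₁ σ₂ : Fin (k + 1) → V, x = s(σ₁, σ₂) ∧ IsFace σ₁ σ ∧ IsFace σ₂ σ' ∧
        IsAlmostSimplex (fun a b => (a, b) ∈ EdgSet σ ∪ EdgSet σ') σ₁ σ₂
          (σ i, σ' i')}.ncard = Nat.choose (n + 1) k := by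
  classical
  have hτ2 : ∀ p, σ (i.succAbove p) = σ' (i'.succAbove p) := fun p => congrFun hττ p
  have haσ' : ∀ y, σ' y ≠ σ i := by
    intro y hy
    rcases eq_or_ne y i' with rfl | hne
    · exact hab hy.symm
    · obtain ⟨p, rfl⟩ := Fin.exists_succAbove_eq hne
      exact Fin.succAbove_ne i p (hσ ((hτ2 p).trans hy))
  have hτa : ∀ p, σ (i.succAbove p) ≠ σ i := fun p hp => Fin.succAbove_ne i p (hσ hp)
  have hτb : ∀ p, σ (i.succAbove p) ≠ σ' i' := by
    intro p hp
    rw [hτ2 p] at hp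
    exact Fin.succAbove_ne i' p (hσ' hp)
  have hb2 : ∀ q : Fin k → Fin (n + 1),
      σ' ∘ fdx q i' = bld (σ ∘ i.succAbove) (σ' i') q i' := by
    intro q
    rw [comp_fdx σ' q i', ← hττ]
  have key : {x : Sym2 (Fin (k + 1) → V) |
      ∃ σ₁ σ₂ : Fin (k + 1) → V, x = s(σ₁, σ₂) ∧ IsFace σ₁ σ ∧ IsFace σ₂ σ' ∧
        IsAlmostSimplex (fun a b => (a, b) ∈ EdgSet σ ∪ EdgSet σ') σ₁ σ₂
          (σ i, σ' i')} =
      (fun q => s(bld (σ ∘ i.succAbove) (σ i) q i, bld (σ ∘ i.succAbove) (σ' i') q i'))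
        '' {q : Fin k → Fin (n + 1) | StrictMono q} := by
    ext x
    simp only [Set.mem_setOf_eq, Set.mem_image]
    constructor
    · rintro ⟨σ₁, σ₂, rfl, ⟨f, hf, rfl⟩, ⟨f', hf', rfl⟩,
        ⟨hinj₁, -⟩, ⟨hinj₂, -⟩, j, j'', hbd, hne, hor⟩
      rcases hor with ⟨hjle, he⟩ | ⟨hjle, he⟩
      swap
      · exact absurd (congrArg Prod.fst he).symm (haσ' (f' j''))
      · have hfj : f j = i := hσ (congrArg Prod.fst he).symm
        have hfj' : f' j'' = i' := hσ' (congrArg Prod.snd he).symm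
        have hne1 : ∀ m : Fin k, f (j.succAbove m) ≠ i := fun m hm =>
          Fin.succAbove_ne j m (hf.injective (hm.trans hfj.symm))
        have hne2 : ∀ m : Fin k, f' (j''.succAbove m) ≠ i' := fun m hm =>
          Fin.succAbove_ne j'' m (hf'.injective (hm.trans hfj'.symm))
        choose q hq using fun m => Fin.exists_succAbove_eq (hne1 m)
        choose q' hq' using fun m => Fin.exists_succAbove_eq (hne2 m)
        have hbd' : ∀ m, σ (f (j.succAbove m)) = σ' (f' (j''.succAbove m)) :=
          fun m => congrFun hbd m
        have hq'q : ∀ m, q' m = q m := by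
          intro m
          apply Fin.succAbove_right_injective (p := i')
          apply hσ'
          rw [hq' m, ← hbd' m, ← hq m]
          exact hτ2 (q m)
        have hqmono : StrictMono q := by
          intro m₁ m₂ hlt
          have h2 : i.succAbove (q m₁) < i.succAbove (q m₂) := by
            rw [hq m₁, hq m₂]
            exact hf (Fin.succAbove_lt_succAbove_iff.mpr hlt)
          exact Fin.succAbove_lt_succAbove_iff.mp h2
        have hcut1 : ∀ m : Fin k, (m : ℕ) < (j : ℕ) ↔ (q m : ℕ) < (i : ℕ) := by
          intro m
          rw [← succAbove_lt_self_iff j m, ← succAbove_lt_self_iff i (q m), hq m, ← hfj]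
          exact (hf.lt_iff_lt).symm
        have hcut2 : ∀ m : Fin k, (m : ℕ) < (j'' : ℕ) ↔ (q m : ℕ) < (i' : ℕ) := by
          intro m
          rw [← succAbove_lt_self_iff j'' m, ← succAbove_lt_self_iff i' (q m), ← hq'q m,
            hq' m, ← hfj']
          exact (hf'.lt_iff_lt).symm
        have hj1 : j = jdx q i := by
          apply Fin.val_injective
          exact cut_unique (by have := j.isLt; omega) (by have := (jdx q i).isLt; omega)
            hcut1 (fun m => cut_iff hqmono m)
        have hj2 : j'' = jdx q i' := by
          apply Fin.val_injective
          exact cut_unique (by have := j''.isLt; omega) (by have := (jdx q i').isLt; omega)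
            hcut2 (fun m => cut_iff hqmono m)
        have hfeq : f = fdx q i := by
          funext m
          rcases eq_or_ne m j with heq | hm
          · rw [heq, hfj, hj1]
            unfold fdx
            rw [Fin.insertNth_apply_same]
          · obtain ⟨p, hp⟩ := Fin.exists_succAbove_eq hm
            rw [← hp, ← hq p, hj1]
            unfold fdx
            rw [Fin.insertNth_apply_succAbove]
            rfl
        have hfeq' : f' = fdx q i' := by
          funext m
          rcases eq_or_ne m j'' with heq | hm
          · rw [heq, hfj', hj2]
            unfold fdx
            rw [Fin.insertNth_apply_same]
          · obtain ⟨p, hp⟩ := Fin.exists_succAbove_eq hm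
            rw [← hp, ← hq' p, hq'q p, hj2]
            unfold fdx
            rw [Fin.insertNth_apply_succAbove]
            rfl
        refine ⟨q, hqmono, ?_⟩
        have e1 : σ ∘ f = bld (σ ∘ i.succAbove) (σ i) q i := by
          rw [hfeq, comp_fdx]
        have e2 : σ' ∘ f' = bld (σ ∘ i.succAbove) (σ' i') q i' := by
          rw [hfeq', hb2]
        rw [e1, e2]
    · rintro ⟨q, hq, rfl⟩
      refine ⟨bld (σ ∘ i.succAbove) (σ i) q i, bld (σ ∘ i.succAbove) (σ' i') q i', rfl,
        ⟨fdx q i, fdx_strictMono hq i, (comp_fdx σ q i).symm⟩,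
        ⟨fdx q i', fdx_strictMono hq i', (hb2 q).symm⟩, ?_, ?_, ?_⟩
      · constructor
        · rw [← comp_fdx σ q i]
          exact hσ.comp (fdx_strictMono hq i).injective
        · intro m₁ m₂ hlt
          exact Or.inl ⟨fdx q i m₁, fdx q i m₂, fdx_strictMono hq i hlt, by
            rw [show bld (σ ∘ i.succAbove) (σ i) q i m₁ = σ (fdx q i m₁) from
                (congrFun (comp_fdx σ q i) m₁).symm,
              show bld (σ ∘ i.succAbove) (σ i) q i m₂ = σ (fdx q i m₂) from
                (congrFun (comp_fdx σ q i) m₂).symm]⟩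
      · constructor
        · rw [← hb2 q]
          exact hσ'.comp (fdx_strictMono hq i').injective
        · intro m₁ m₂ hlt
          exact Or.inr ⟨fdx q i' m₁, fdx q i' m₂, fdx_strictMono hq i' hlt, by
            rw [show bld (σ ∘ i.succAbove) (σ' i') q i' m₁ = σ' (fdx q i' m₁) from
                (congrFun (hb2 q) m₁).symm,
              show bld (σ ∘ i.succAbove) (σ' i') q i' m₂ = σ' (fdx q i' m₂) from
                (congrFun (hb2 q) m₂).symm]⟩
      · refine ⟨jdx q i, jdx q i', ?_, ?_, Or.inl ⟨?_, ?_⟩⟩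
        · funext m
          show bld (σ ∘ i.succAbove) (σ i) q i ((jdx q i).succAbove m) =
            bld (σ ∘ i.succAbove) (σ' i') q i' ((jdx q i').succAbove m)
          rw [bld_succAbove, bld_succAbove]
        · rw [bld_same, bld_same]
          exact hab
        · rw [Fin.le_def]
          show (Finset.univ.filter fun m => ((q m : ℕ) < (i : ℕ))).card ≤
            (Finset.univ.filter fun m => ((q m : ℕ) < (i' : ℕ))).card
          apply Finset.card_le_card
          intro m hm
          simp only [Finset.mem_filter, Finset.mem_univ, true_and] at hm ⊢
          have hii : (i : ℕ) ≤ (i' : ℕ) := hii'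
          omega
        · rw [bld_same, bld_same]
  have hinjΦ : Set.InjOn
      (fun q => s(bld (σ ∘ i.succAbove) (σ i) q i, bld (σ ∘ i.succAbove) (σ' i') q i'))
      {q : Fin k → Fin (n + 1) | StrictMono q} := by
    intro q hq q' hq' heq
    rw [Sym2.eq_iff] at heq
    have hcross : ∀ (r r' : Fin k → Fin (n + 1)),
        bld (σ ∘ i.succAbove) (σ i) r i = bld (σ ∘ i.succAbove) (σ' i') r' i' → False := by
      intro r r' hcontra
      have hc := congrFun hcontra (jdx r i)
      rw [bld_same] at hc
      rcases bld_cases (σ ∘ i.succAbove) (σ' i') r' i' (jdx r i) with ⟨-, hx⟩ | ⟨p, hx⟩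
      · rw [hx] at hc
        exact hab hc
      · rw [hx] at hc
        exact hτa (r' p) hc.symm
    rcases heq with ⟨h1, -⟩ | ⟨h1, -⟩
    swap
    · exact absurd h1 (fun hc => hcross q q' hc)
    · have hjj : jdx q i = jdx q' i := by
        by_contra hne
        have hc := congrFun h1 (jdx q i)
        rw [bld_same] at hc
        rcases bld_cases (σ ∘ i.succAbove) (σ i) q' i (jdx q i) with ⟨hj, -⟩ | ⟨p, hx⟩
        · exact hne hj
        · rw [hx] at hc
          exact hτa (q' p) hc.symm
      funext m
      have hc := congrFun h1 ((jdx q i).succAbove m)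
      rw [bld_succAbove, hjj, bld_succAbove] at hc
      exact Fin.succAbove_right_injective (hσ hc)
  rw [key, Set.ncard_image_of_injOn hinjΦ, ncard_strictMono_set]


lemma almost_symm {V : Type*} {E : V → V → Prop} {m : ℕ} {α β : Fin (m + 1) → V} {e : V × V}
    (h : IsAlmostSimplex E α β e) : IsAlmostSimplex E β α e := by
  obtain ⟨h1, h2, i, i', hbd, hne, hor⟩ := h
  exact ⟨h2, h1, i', i, hbd.symm, hne.symm, hor.symm⟩


end AlmostAux

/-- **Lemma 3.** Let `({σ, σ'}, (e₁, e₂))` be an almost-`d`-simplex (`d = n+2 ≥ 2`) in a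
simple directed graph. Then for every `i ∈ {1, …, d}` (here `i = k+1` with `k ≤ n+1`),
the subgraph with vertices `Ver(σ) ∪ Ver(σ')` and edges `Edg(σ) ∪ Edg(σ')` contains
exactly `C(d-1, i-1) = C(n+1, k)` almost-`i`-simplices `({σ₁, σ₂}, (e₁, e₂))` with
missing pair `(e₁, e₂)` and `σ₁, σ₂` faces of `σ` respectively `σ'`. -/
theorem almost_simplices_inside_almost_simplex {V : Type*} [Fintype V]
    (E : V → V → Prop) (hE : Irreflexive E)
    (n : ℕ) (σ σ' : Fin (n + 2) → V) (e₁ e₂ : V)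
    (h : IsAlmostSimplex E σ σ' (e₁, e₂)) :
    ∀ k : ℕ, k ≤ n + 1 →
      {x : Sym2 (Fin (k + 1) → V) |
        ∃ σ₁ σ₂ : Fin (k + 1) → V, x = s(σ₁, σ₂) ∧ IsFace σ₁ σ ∧ IsFace σ₂ σ' ∧
          IsAlmostSimplex (fun a b => (a, b) ∈ EdgSet σ ∪ EdgSet σ') σ₁ σ₂
            (e₁, e₂)}.ncard
        = Nat.choose (n + 1) k := by
  intro k _hk
  obtain ⟨hσs, hσ's, i, i', hττ, hab, hor⟩ := h
  rcases hor with ⟨hii', he⟩ | ⟨hii', he⟩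
  · have h1 : e₁ = σ i := congrArg Prod.fst he
    have h2 : e₂ = σ' i' := congrArg Prod.snd he
    subst h1; subst h2
    exact AlmostAux.core hσs.1 hσ's.1 hττ hab hii' k
  · have h1 : e₁ = σ' i' := congrArg Prod.fst he
    have h2 : e₂ = σ i := congrArg Prod.snd he
    subst h1; subst h2
    have hcore := AlmostAux.core hσ's.1 hσs.1 hττ.symm (Ne.symm hab) hii' k
    rw [← hcore]
    have hEeq : (fun a b => (a, b) ∈ EdgSet σ ∪ EdgSet σ') =
        (fun a b => (a, b) ∈ EdgSet σ' ∪ EdgSet σ) := by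
      funext a b
      exact propext (by rw [Set.union_comm])
    congr 1
    ext x
    simp only [Set.mem_setOf_eq]
    constructor
    · rintro ⟨σ₁, σ₂, hx, hf1, hf2, hA⟩
      exact ⟨σ₂, σ₁, hx.trans (Sym2.eq_swap), hf2, hf1, hEeq ▸ (AlmostAux.almost_symm hA)⟩
    · rintro ⟨σ₂, σ₁, hx, hf2, hf1, hA⟩
      exact ⟨σ₁, σ₂, hx.trans (Sym2.eq_swap), hf1, hf2, hEeq ▸ (AlmostAux.almost_symm hA)⟩
end

section
/- In any simple directed graph G, for every d ≥ 2, the number of completed almost-d-simplices of G (those almost-d-simplices ({σ, σ'}, e) with e ∈ E) equals C(d+1, 2) times the number of d-simplices of G. -/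
/-! A completed almost-`d`-simplex is the same thing as a `d`-simplex `τ` with two positions
`i < j`: the faces `∂_j τ` and `∂_i τ` share the face obtained by deleting both positions, and
the missing pair `(τ i, τ j)` is an edge of `τ`. Conversely, inserting the missing vertex of `σ'`
into `σ` rebuilds `τ`; it is a simplex because every pair of its positions other than `{i, j}`
lies in one of the two faces, and the pair `{i, j}` carries the edge `e`. Injectivity of `τ`
recovers `i` and `j` from the almost-simplex, so this is a bijection onto the pairs `(τ, i < j)`,
of which there are `C(d + 1, 2)` per simplex. -/

namespace Fin

lemma succ_succAbove_of_le {n : ℕ} {a b : Fin (n + 1)} (hab : a ≤ b) :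
    b.succ.succAbove a = a.castSucc :=
  succAbove_of_castSucc_lt _ _ (castSucc_lt_succ_iff.mpr hab)

lemma succ_succAbove_comp_succAbove {n : ℕ} {a b : Fin (n + 1)} (hab : a ≤ b) :
    b.succ.succAbove ∘ a.succAbove = a.castSucc.succAbove ∘ b.succAbove := by
  funext k
  have := succAbove_succAbove_succAbove_predAbove b.succ a k
  rw [succ_succAbove_of_le hab, predAbove_of_castSucc_lt _ _ (castSucc_lt_succ_iff.mpr hab),
    pred_succ] at this
  exact this.symm

end Fin

lemma Set.ncard_setOf_fst_le_snd (α : Type*) [LinearOrder α] :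
    {p : α × α | p.1 ≤ p.2}.ncard = (Nat.card α + 1).choose 2 := by
  rw [← Nat.card_coe_set_eq, ← Sym2.natCard]
  exact Nat.card_congr Sym2.sortEquiv.symm

section

variable {V : Type*} {E : V → V → Prop} {n : ℕ}

lemma isSimplex_iff_forall_lt {τ : Fin n → V} :
    IsSimplex E τ ↔ ∀ x y, x < y → τ x ≠ τ y ∧ E (τ x) (τ y) := by
  refine ⟨fun h x y hxy => ⟨h.1.ne hxy.ne, h.2 x y hxy⟩,
    fun h => ⟨fun x y hxy => ?_, fun x y hxy => (h x y hxy).2⟩⟩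
  by_contra hne
  rcases Ne.lt_or_gt hne with hlt | hlt
  · exact (h x y hlt).1 hxy
  · exact (h y x hlt).1 hxy.symm

lemma IsSimplex.comp_succAbove {τ : Fin (n + 1) → V} (hτ : IsSimplex E τ) (p : Fin (n + 1)) :
    IsSimplex E (τ ∘ p.succAbove) :=
  ⟨hτ.1.comp Fin.succAbove_right_injective,
    fun _ _ hxy => hτ.2 _ _ (Fin.succAbove_lt_succAbove_iff.mpr hxy)⟩

lemma IsSimplex.ne_and_rel_of_ne_of_ne {τ : Fin (n + 1) → V} {p : Fin (n + 1)}
    (h : IsSimplex E (τ ∘ p.succAbove)) {x y : Fin (n + 1)} (hxy : x < y) (hx : x ≠ p)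
    (hy : y ≠ p) : τ x ≠ τ y ∧ E (τ x) (τ y) := by
  obtain ⟨x', rfl⟩ := Fin.exists_succAbove_eq hx
  obtain ⟨y', rfl⟩ := Fin.exists_succAbove_eq hy
  exact isSimplex_iff_forall_lt.mp h x' y' (Fin.succAbove_lt_succAbove_iff.mp hxy)

lemma isSimplex_of_faces {τ : Fin (n + 1) → V} {a b : Fin (n + 1)} (hab : a < b)
    (ha : IsSimplex E (τ ∘ a.succAbove)) (hb : IsSimplex E (τ ∘ b.succAbove))
    (hne : τ a ≠ τ b) (hE : E (τ a) (τ b)) : IsSimplex E τ := by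
  refine isSimplex_iff_forall_lt.mpr fun x y hxy => ?_
  by_cases hxb : x ≠ b ∧ y ≠ b
  · exact hb.ne_and_rel_of_ne_of_ne hxy hxb.1 hxb.2
  by_cases hxa : x ≠ a ∧ y ≠ a
  · exact ha.ne_and_rel_of_ne_of_ne hxy hxa.1 hxa.2
  obtain ⟨rfl, rfl⟩ : x = a ∧ y = b := by
    simp only [Fin.lt_def, Fin.ext_iff, ne_eq] at hab hxy hxa hxb ⊢
    omega
  exact ⟨hne, hE⟩

/-- A pair `a ≤ b` in `Fin (n + 2)` stands for the pair of positions `a.castSucc < b.succ` in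
`Fin (n + 3)`; every pair `i < j` of positions arises this way exactly once. -/
def facePair (τ : Fin (n + 3) → V) (p : Fin (n + 2) × Fin (n + 2)) :
    Sym2 (Fin (n + 2) → V) × (V × V) :=
  (s(τ ∘ p.2.succ.succAbove, τ ∘ p.1.castSucc.succAbove), (τ p.1.castSucc, τ p.2.succ))

lemma comp_succ_succAbove_apply {α : Type*} {τ : Fin (n + 3) → α} {a b : Fin (n + 2)}
    (hab : a ≤ b) : (τ ∘ b.succ.succAbove) a = τ a.castSucc := by
  rw [Function.comp_apply, Fin.succ_succAbove_of_le hab]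

lemma comp_castSucc_succAbove_apply {α : Type*} {τ : Fin (n + 3) → α} {a b : Fin (n + 2)}
    (hab : a ≤ b) : (τ ∘ a.castSucc.succAbove) b = τ b.succ := by
  rw [Function.comp_apply, Fin.succAbove_castSucc_of_le _ _ hab]

lemma IsSimplex.isAlmostSimplex_facePair {τ : Fin (n + 3) → V} (hτ : IsSimplex E τ)
    {a b : Fin (n + 2)} (hab : a ≤ b) :
    IsAlmostSimplex E (τ ∘ b.succ.succAbove) (τ ∘ a.castSucc.succAbove)
      (τ a.castSucc, τ b.succ) := by
  refine ⟨hτ.comp_succAbove _, hτ.comp_succAbove _, a, b, ?_, ?_, Or.inl ⟨hab, ?_⟩⟩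
  · simp only [Function.comp_assoc, Fin.succ_succAbove_comp_succAbove hab]
  · rw [comp_succ_succAbove_apply hab, comp_castSucc_succAbove_apply hab]
    exact hτ.1.ne (Fin.castSucc_lt_succ_iff.mpr hab).ne
  · rw [comp_succ_succAbove_apply hab, comp_castSucc_succAbove_apply hab]

lemma exists_isSimplex_facePair_eq {σ σ' : Fin (n + 2) → V} {a b : Fin (n + 2)} (hab : a ≤ b)
    (hσ : IsSimplex E σ) (hσ' : IsSimplex E σ') (hface : σ ∘ a.succAbove = σ' ∘ b.succAbove)
    (hne : σ a ≠ σ' b) (hE : E (σ a) (σ' b)) :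
    ∃ τ, IsSimplex E τ ∧ facePair τ (a, b) = (s(σ, σ'), (σ a, σ' b)) := by
  set τ : Fin (n + 3) → V := Fin.insertNth b.succ (σ' b) σ
  have hτb : τ b.succ = σ' b := Fin.insertNth_apply_same _ _ _
  have hτa : τ a.castSucc = σ a := by
    rw [← Fin.succ_succAbove_of_le hab]
    exact Fin.insertNth_apply_succAbove _ _ _ _
  have hfaceb : τ ∘ b.succ.succAbove = σ := Fin.removeNth_insertNth _ _ _
  have hfacea : τ ∘ a.castSucc.succAbove = σ' := by
    funext k
    induction k using Fin.succAboveCases b with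
    | x => simpa only [Function.comp_apply, Fin.succAbove_castSucc_of_le _ _ hab]
    | p m =>
      have := congrFun (Fin.succ_succAbove_comp_succAbove hab) m
      simp only [Function.comp_apply] at this ⊢
      rw [← this]
      exact (congrFun hfaceb _).trans (congrFun hface m)
  refine ⟨τ, isSimplex_of_faces (Fin.castSucc_lt_succ_iff.mpr hab) ?_ ?_ ?_ ?_, ?_⟩
  · rwa [hfacea]
  · rwa [hfaceb]
  · rwa [hτa, hτb]
  · rwa [hτa, hτb]
  · simp only [facePair, hfacea, hfaceb, hτa, hτb]

lemma injOn_uncurry_facePair :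
    Set.InjOn (Function.uncurry (facePair (V := V) (n := n)))
      ({τ | Function.Injective τ} ×ˢ {p | p.1 ≤ p.2}) := by
  rintro ⟨τ, a, b⟩ ⟨hτ : Function.Injective τ, hp : a ≤ b⟩ ⟨τ', a', b'⟩
    ⟨hτ' : Function.Injective τ', hp' : a' ≤ b'⟩ h
  simp only [Function.uncurry_apply_pair, facePair, Prod.mk.injEq, Sym2.eq_iff] at h
  obtain ⟨⟨hb, ha⟩ | ⟨hb, _⟩, hτa, hτb⟩ := h
  · have haa' : a = a' := (hτ.comp (Fin.succAbove_right_injective (p := b.succ))) <| calc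
      (τ ∘ b.succ.succAbove) a = τ a.castSucc := comp_succ_succAbove_apply hp
      _ = τ' a'.castSucc := hτa
      _ = (τ ∘ b.succ.succAbove) a' := by rw [hb, comp_succ_succAbove_apply hp']
    subst haa'
    have hbb' : b = b' := (hτ.comp (Fin.succAbove_right_injective (p := a.castSucc))) <| calc
      (τ ∘ a.castSucc.succAbove) b = τ b.succ := comp_castSucc_succAbove_apply hp
      _ = τ' b'.succ := hτb
      _ = (τ ∘ a.castSucc.succAbove) b' := by rw [ha, comp_castSucc_succAbove_apply hp']
    subst hbb'
    congr 1
    rw [← Fin.insertNth_self_removeNth b.succ τ, ← Fin.insertNth_self_removeNth b.succ τ', hτb]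
    exact congrArg (Fin.insertNth _ _) hb
  · refine absurd (hτ' ?_) (Fin.succAbove_ne a'.castSucc a)
    rw [← hτa, ← comp_succ_succAbove_apply (τ := τ) hp, hb, Function.comp_apply]

lemma setOf_completed_almostSimplex_eq_image :
    {x : Sym2 (Fin (n + 2) → V) × (V × V) |
        (∃ σ σ', x.1 = s(σ, σ') ∧ IsAlmostSimplex E σ σ' x.2) ∧ E x.2.1 x.2.2}
      = Function.uncurry facePair '' ({τ | IsSimplex E τ} ×ˢ {p | p.1 ≤ p.2}) := by
  ext ⟨S, e⟩
  constructor
  · rintro ⟨⟨σ, σ', rfl, hσ, hσ', i, i', hface, hne, ⟨hle, rfl⟩ | ⟨hle, rfl⟩⟩, hE⟩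
    · obtain ⟨τ, hτ, h⟩ := exists_isSimplex_facePair_eq hle hσ hσ' hface hne hE
      exact ⟨(τ, (i, i')), ⟨hτ, hle⟩, h⟩
    · obtain ⟨τ, hτ, h⟩ := exists_isSimplex_facePair_eq hle hσ' hσ hface.symm hne.symm hE
      exact ⟨(τ, (i', i)), ⟨hτ, hle⟩, h.trans (by rw [Sym2.eq_swap])⟩
  · rintro ⟨⟨τ, a, b⟩, ⟨hτ : IsSimplex E τ, hab : a ≤ b⟩, h⟩
    rw [← h]
    exact ⟨⟨_, _, rfl, hτ.isAlmostSimplex_facePair hab⟩,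
      hτ.2 _ _ (Fin.castSucc_lt_succ_iff.mpr hab)⟩

end

theorem completed_almost_simplices_count_general {V : Type*}
    (E : V → V → Prop) (n : ℕ) :
    {x : Sym2 (Fin (n + 2) → V) × (V × V) |
        (∃ σ σ', x.1 = s(σ, σ') ∧ IsAlmostSimplex E σ σ' x.2) ∧ E x.2.1 x.2.2}.ncard
      = Nat.choose (n + 3) 2 * {τ : Fin (n + 3) → V | IsSimplex E τ}.ncard := by
  have hinj : Set.InjOn (Function.uncurry facePair)
      ({τ : Fin (n + 3) → V | IsSimplex E τ} ×ˢ {p | p.1 ≤ p.2}) :=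
    injOn_uncurry_facePair.mono (Set.prod_mono (fun _ hτ => hτ.1) le_rfl)
  rw [setOf_completed_almostSimplex_eq_image, hinj.ncard_image, Set.ncard_prod,
    Set.ncard_setOf_fst_le_snd, Nat.card_fin, mul_comm]

/-- In any simple directed graph, for every `d = n+2 ≥ 2`, the number of completed
almost-`d`-simplices (those `({σ, σ'}, e)` with `e ∈ E`, encoded as an unordered pair
in `Sym2` together with the missing pair `e`) equals `C(d+1, 2)` times the number of
`d`-simplices. -/
theorem completed_almost_simplices_count {V : Type*} [Fintype V]
    (E : V → V → Prop) (hE : Irreflexive E) (n : ℕ) :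
    {x : Sym2 (Fin (n + 2) → V) × (V × V) |
        (∃ σ σ', x.1 = s(σ, σ') ∧ IsAlmostSimplex E σ σ' x.2) ∧ E x.2.1 x.2.2}.ncard
      = Nat.choose (n + 3) 2 * {τ : Fin (n + 3) → V | IsSimplex E τ}.ncard :=
  completed_almost_simplices_count_general E n
end

section
/- In any simple directed graph G, for every d ≥ 2, the total number N_d^A of almost-d-simplices of G satisfies N_d^A ≥ C(d+1, 2) · N_d, where N_d is the number of d-simplices of G. -/
private lemma sa_val {m : ℕ} (p : Fin (m + 1)) (i : Fin m) :
    (p.succAbove i).val = if i.val < p.val then i.val else i.val + 1 := by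
  rw [Fin.succAbove]
  split_ifs with h h' h'
  · rfl
  · exact absurd h h'
  · exact absurd h' h
  · rfl

private lemma double_del {m : ℕ} (i j : Fin (m + 3)) (h : i < j) (k : Fin (m + 1)) :
    j.succAbove ((⟨i.val, by omega⟩ : Fin (m + 2)).succAbove k)
      = i.succAbove ((⟨j.val - 1, by omega⟩ : Fin (m + 2)).succAbove k) := by
  have hi := i.isLt; have hj := j.isLt; have h' : i.val < j.val := h
  apply Fin.ext
  simp only [sa_val]
  split_ifs <;> omega

private lemma simplex_face {V : Type*} (E : V → V → Prop) {m : ℕ} {τ : Fin (m + 1) → V}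
    (hτ : IsSimplex E τ) (p : Fin (m + 1)) : IsSimplex E (τ ∘ p.succAbove) := by
  refine ⟨hτ.1.comp Fin.succAbove_right_injective, fun a b hab => ?_⟩
  exact hτ.2 _ _ ((Fin.strictMono_succAbove p) hab)

private lemma my_ncard_prod {α β : Type*} (s : Set α) (t : Set β) :
    (s ×ˢ t).ncard = s.ncard * t.ncard := by
  simp only [← Nat.card_coe_set_eq]
  rw [Nat.card_congr (Equiv.Set.prod s t), Nat.card_prod]

private lemma card_lt_pairs (m : ℕ) :
    {p : Fin m × Fin m | p.1 < p.2}.ncard = Nat.choose m 2 := by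
  classical
  have hset : {p : Fin m × Fin m | p.1 < p.2}
      = ↑(Finset.univ.filter (fun p : Fin m × Fin m => p.1 < p.2)) := by
    ext p; simp
  rw [hset, Set.ncard_coe_finset]
  set F := Finset.univ.filter (fun p : Fin m × Fin m => p.1 < p.2) with hF
  set G := Finset.univ.filter (fun p : Fin m × Fin m => p.2 < p.1) with hG
  have himg : F.image Prod.swap = G := by
    ext p
    simp only [hF, hG, Finset.mem_image, Finset.mem_filter, Finset.mem_univ, true_and]
    constructor
    · rintro ⟨q, hq, rfl⟩; exact hq
    · intro hp; exact ⟨p.swap, hp, by simp⟩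
  have hcard : F.card = G.card := by
    rw [← himg, Finset.card_image_of_injective _ Prod.swap_injective]
  have hdisj : Disjoint F G := by
    rw [Finset.disjoint_left]
    intro p hp hp'
    simp only [hF, hG, Finset.mem_filter] at hp hp'
    exact absurd (hp.2.trans hp'.2) (lt_irrefl _)
  have hunion : F ∪ G = (Finset.univ : Finset (Fin m)).offDiag := by
    ext p
    simp only [hF, hG, Finset.mem_union, Finset.mem_filter, Finset.mem_univ, true_and,
      Finset.mem_offDiag]
    constructor
    · rintro (h | h)
      · exact ne_of_lt h
      · exact ne_of_gt h
    · intro h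
      rcases lt_or_gt_of_ne h with h' | h'
      · exact Or.inl h'
      · exact Or.inr h'
  have hoff : ((Finset.univ : Finset (Fin m)).offDiag).card = m * m - m := by
    rw [Finset.offDiag_card]; simp
  have hmm : m * m - m = m * (m - 1) := by
    cases m with
    | zero => simp
    | succ k => rw [Nat.succ_sub_one, Nat.mul_succ, Nat.add_sub_cancel]
  have h2 : F.card * 2 = m * (m - 1) := by
    have h3 := Finset.card_union_of_disjoint hdisj
    rw [hunion, hoff, hmm] at h3
    omega
  rw [Nat.choose_two_right]
  omega

private lemma sa_eq_of_lt {m : ℕ} (p q : Fin (m + 1)) (h : q < p) :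
    p.succAbove ⟨q.val, by omega⟩ = q := by
  apply Fin.ext
  rw [sa_val]
  have : q.val < p.val := h
  simp [this]

private lemma sa_eq_of_gt {m : ℕ} (p q : Fin (m + 1)) (h : p < q) :
    p.succAbove ⟨q.val - 1, by omega⟩ = q := by
  apply Fin.ext
  rw [sa_val]
  simp only [Fin.val_mk]
  have : p.val < q.val := h
  split_ifs <;> omega

/-- In any simple directed graph, for every `d = n+2 ≥ 2`, the total number `N_d^A` of
almost-`d`-simplices (encoded as an unordered pair in `Sym2` together with the missing
pair `e`) satisfies `N_d^A ≥ C(d+1, 2) · N_d`, where `N_d` is the number of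
`d`-simplices. -/
theorem almost_simplices_lower_bound {V : Type*} [Fintype V]
    (E : V → V → Prop) (hE : Irreflexive E) (n : ℕ) :
    {x : Sym2 (Fin (n + 2) → V) × (V × V) |
        ∃ σ σ', x.1 = s(σ, σ') ∧ IsAlmostSimplex E σ σ' x.2}.ncard
      ≥ Nat.choose (n + 3) 2 * {τ : Fin (n + 3) → V | IsSimplex E τ}.ncard := by
  classical
  set T : Set (Sym2 (Fin (n + 2) → V) × (V × V)) :=
    {x | ∃ σ σ', x.1 = s(σ, σ') ∧ IsAlmostSimplex E σ σ' x.2} with hT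
  set S : Set (Fin (n + 3) → V) := {τ | IsSimplex E τ} with hS
  set P : Set (Fin (n + 3) × Fin (n + 3)) := {p | p.1 < p.2} with hP
  set g : (Fin (n + 3) × Fin (n + 3)) × (Fin (n + 3) → V) →
      Sym2 (Fin (n + 2) → V) × (V × V) :=
    fun x => (s(x.2 ∘ x.1.2.succAbove, x.2 ∘ x.1.1.succAbove), (x.2 x.1.1, x.2 x.1.2))
    with hg
  -- the image of the product lands in T
  have hsub : g '' (P ×ˢ S) ⊆ T := by
    rintro - ⟨⟨⟨i, j⟩, τ⟩, ⟨hij, hτ⟩, rfl⟩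
    simp only [hP, Set.mem_setOf_eq] at hij
    simp only [hS, Set.mem_setOf_eq] at hτ
    have hij' : i.val < j.val := hij
    have hjlt := j.isLt
    refine ⟨τ ∘ j.succAbove, τ ∘ i.succAbove, rfl, simplex_face E hτ j, simplex_face E hτ i,
      ⟨i.val, by omega⟩, ⟨j.val - 1, by omega⟩, ?_, ?_, Or.inl ⟨?_, ?_⟩⟩
    · funext k
      exact congrArg τ (double_del i j hij k)
    · simp only [Function.comp_apply, sa_eq_of_lt j i hij, sa_eq_of_gt i j hij]
      exact fun hc => absurd (hτ.1 hc) (ne_of_lt hij)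
    · exact by simp only [Fin.mk_le_mk]; omega
    · simp only [hg, Function.comp_apply, sa_eq_of_lt j i hij, sa_eq_of_gt i j hij]
  -- g is injective on the product
  have hinj : Set.InjOn g (P ×ˢ S) := by
    rintro ⟨⟨i, j⟩, τ⟩ ⟨hij, hτ⟩ ⟨⟨k, l⟩, ρ⟩ ⟨hkl, hρ⟩ heq
    simp only [hP, Set.mem_setOf_eq] at hij hkl
    simp only [hS, Set.mem_setOf_eq] at hτ hρ
    have hij' : i.val < j.val := hij
    have hkl' : k.val < l.val := hkl
    have hjlt := j.isLt; have hllt := l.isLt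
    simp only [hg, Prod.mk.injEq, Sym2.eq_iff] at heq
    obtain ⟨(⟨H1, H2⟩ | ⟨H1, H2⟩), He1, He2⟩ := heq
    · -- uncrossed case
      have hik : i = k := by
        have c1 := congrFun H1 ⟨i.val, by omega⟩
        simp only [Function.comp_apply, sa_eq_of_lt j i hij] at c1
        have hk : k = l.succAbove ⟨i.val, by omega⟩ := hρ.1 (He1.symm.trans c1)
        have c2 := congrFun H1 ⟨k.val, by omega⟩
        simp only [Function.comp_apply, sa_eq_of_lt l k hkl] at c2
        have hi : i = j.succAbove ⟨k.val, by omega⟩ := hτ.1 (He1.trans c2.symm)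
        have hkv : k.val = if i.val < l.val then i.val else i.val + 1 := by
          rw [hk]; exact sa_val l ⟨i.val, by omega⟩
        have hiv : i.val = if k.val < j.val then k.val else k.val + 1 := by
          rw [hi]; exact sa_val j ⟨k.val, by omega⟩
        apply Fin.ext
        split_ifs at hkv hiv <;> omega
      subst hik
      have hjl : j = l := by
        have c3 := congrFun H2 ⟨j.val - 1, by omega⟩
        simp only [Function.comp_apply, sa_eq_of_gt i j hij] at c3
        exact hρ.1 (c3.symm.trans He2)
      subst hjl
      have hτρ : τ = ρ := by
        funext a
        by_cases ha : a = j
        · rw [ha]; exact He2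
        · obtain ⟨b, hb⟩ := Fin.exists_succAbove_eq ha
          rw [← hb]
          exact congrFun H1 b
      rw [hτρ]
    · -- crossed case: impossible
      exfalso
      have c1 := congrFun H1 ⟨i.val, by omega⟩
      simp only [Function.comp_apply, sa_eq_of_lt j i hij] at c1
      have : k = k.succAbove ⟨i.val, by omega⟩ := hρ.1 (He1.symm.trans c1)
      exact Fin.succAbove_ne k ⟨i.val, by omega⟩ this.symm
  calc Nat.choose (n + 3) 2 * S.ncard
      = P.ncard * S.ncard := by rw [hP, card_lt_pairs]
    _ = (P ×ˢ S).ncard := (my_ncard_prod P S).symm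
    _ = (g '' (P ×ˢ S)).ncard := (Set.ncard_image_of_injOn hinj).symm
    _ ≤ T.ncard := Set.ncard_le_ncard hsub (Set.toFinite T)
end

section
/- Let G be a simple directed graph, d ≥ 2, and let N_{d−1} be the number of (d−1)-simplices of G. Define X_d = {(σ, σ') : σ, σ' are (d−1)-simplices of G with Ver(σ) = Ver(σ'), σ ≠ σ', and σ, σ' share a common boundary, i.e. ∂_i(σ) = ∂_{i'}(σ') for some i, i' ∈ {0, …, d−1}}. Then |X_d| ≤ d² · N_{d−1}. -/
open Function Set

lemma Fin.eq_insertNth_of_comp_succAbove_eq {V : Type*} {m : ℕ} {σ σ' : Fin (m + 1) → V}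
    (hσ' : Injective σ') (hr : range σ' ⊆ range σ) {i i' : Fin (m + 1)}
    (h : σ ∘ i.succAbove = σ' ∘ i'.succAbove) :
    σ' = i'.insertNth (σ i) (σ ∘ i.succAbove) := by
  have hvertex : σ' i' = σ i := by
    obtain ⟨k, hk⟩ := hr (mem_range_self i')
    rcases eq_or_ne k i with rfl | hne
    · exact hk.symm
    · obtain ⟨j, rfl⟩ := Fin.exists_succAbove_eq hne
      refine absurd (hσ' ?_) (Fin.succAbove_ne i' j)
      rw [← hk, ← comp_apply (f := σ'), ← h, comp_apply]
  rw [← hvertex, h]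
  exact (i'.insertNth_self_removeNth σ').symm

lemma ncard_setOf_comp_succAbove_eq_le {V : Type*} [Finite V] {m : ℕ}
    (S : Set (Fin (m + 1) → V)) :
    {x : (Fin (m + 1) → V) × (Fin (m + 1) → V) |
        x.1 ∈ S ∧ Injective x.2 ∧ range x.2 ⊆ range x.1 ∧
        ∃ i i' : Fin (m + 1), x.1 ∘ i.succAbove = x.2 ∘ i'.succAbove}.ncard
      ≤ (m + 1) ^ 2 * S.ncard := by
  calc _ ≤ (⋃ p : Fin (m + 1) × Fin (m + 1),
          {x : (Fin (m + 1) → V) × (Fin (m + 1) → V) |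
            x.1 ∈ S ∧ Injective x.2 ∧ range x.2 ⊆ range x.1 ∧
            x.1 ∘ p.1.succAbove = x.2 ∘ p.2.succAbove}).ncard := by
        refine ncard_le_ncard ?_
        rintro x ⟨hS, hinj, hr, i, i', h⟩
        exact mem_iUnion.2 ⟨(i, i'), hS, hinj, hr, h⟩
    _ ≤ ∑ _p : Fin (m + 1) × Fin (m + 1), S.ncard := by
        refine (ncard_iUnion_le_of_fintype _).trans (Finset.sum_le_sum fun p _ => ?_)
        refine ncard_le_ncard_of_injOn Prod.fst (fun x hx => hx.1) ?_
        rintro ⟨σ, σ'⟩ ⟨-, hσ', hr, h⟩ ⟨τ, τ'⟩ ⟨-, hτ', hr', h'⟩ (rfl : σ = τ)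
        exact Prod.ext rfl <| (Fin.eq_insertNth_of_comp_succAbove_eq hσ' hr h).trans
          (Fin.eq_insertNth_of_comp_succAbove_eq hτ' hr' h').symm
    _ = (m + 1) ^ 2 * S.ncard := by simp [sq]

theorem X_d_bound_general {V : Type*} [Fintype V]
    (E : V → V → Prop) (n : ℕ) :
    {x : (Fin (n + 2) → V) × (Fin (n + 2) → V) |
        IsSimplex E x.1 ∧ IsSimplex E x.2 ∧
        Set.range x.1 = Set.range x.2 ∧ x.1 ≠ x.2 ∧
        ∃ i i' : Fin (n + 2), x.1 ∘ i.succAbove = x.2 ∘ i'.succAbove}.ncard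
      ≤ (n + 2) ^ 2 * {σ : Fin (n + 2) → V | IsSimplex E σ}.ncard := by
  refine (ncard_le_ncard ?_).trans (ncard_setOf_comp_succAbove_eq_le _)
  rintro x ⟨hσ, hσ', hr, -, hfacet⟩
  exact ⟨hσ, hσ'.1, hr.superset, hfacet⟩

/-- **Bound on `|X_d|` (Proposition 1).** For `d = n+2 ≥ 2`, the set `X_d` of pairs
`(σ, σ')` of distinct `(d-1)`-simplices with the same vertex set sharing a common
boundary has cardinality at most `d² · N_{d-1}`, where `N_{d-1}` is the number of
`(d-1)`-simplices. -/
theorem X_d_bound {V : Type*} [Fintype V]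
    (E : V → V → Prop) (hE : Irreflexive E) (n : ℕ) :
    {x : (Fin (n + 2) → V) × (Fin (n + 2) → V) |
        IsSimplex E x.1 ∧ IsSimplex E x.2 ∧
        Set.range x.1 = Set.range x.2 ∧ x.1 ≠ x.2 ∧
        ∃ i i' : Fin (n + 2), x.1 ∘ i.succAbove = x.2 ∘ i'.succAbove}.ncard
      ≤ (n + 2) ^ 2 * {σ : Fin (n + 2) → V | IsSimplex E σ}.ncard :=
  X_d_bound_general E n
end

section
/- Let ({σ, σ'}, e) be an almost-d-simplex (d ≥ 2) in a simple directed graph. Then the graph G = (V, E) with V = Ver(σ) ∪ Ver(σ') and E = Edg(σ) ∪ Edg(σ') (i.e. the almost-d-simplex without its missing edge e) contains no d-simplex. -/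
/-
Write `d = n + 2`. The two faces `σ` and `σ'` share `d - 1` vertices, so the graph has exactly
`d + 1` vertices: those of `σ` and the apex `σ' i'` of `σ'` opposite the shared face. A `d`-simplex
has `d + 1` distinct vertices, each on an edge, so it uses all of them, in particular both `σ i`
and `σ' i'`, and two of its vertices are always joined by an edge. But an edge of `σ` or of `σ'`
never joins `σ i` and `σ' i'`, since `σ i` is not a vertex of `σ'` and `σ' i'` is not a vertex
of `σ`: that edge is exactly the missing edge `e`.
-/

open Set Function

section

variable {V : Type*}

lemma mem_range_of_mem_edgSet {m : ℕ} {σ : Fin m → V} {a b : V} (h : (a, b) ∈ EdgSet σ) :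
    a ∈ range σ ∧ b ∈ range σ := by
  obtain ⟨i, j, -, hij⟩ := h
  obtain ⟨rfl, rfl⟩ := Prod.ext_iff.mp hij
  exact ⟨⟨i, rfl⟩, ⟨j, rfl⟩⟩

namespace IsSimplex

variable {F : V → V → Prop}

lemma range_subset {m : ℕ} {τ : Fin (m + 2) → V} {S : Set V} (hτ : IsSimplex F τ)
    (hF : ∀ a b, F a b → a ∈ S ∧ b ∈ S) : range τ ⊆ S := by
  rintro _ ⟨k, rfl⟩
  rcases eq_or_ne k 0 with rfl | hk
  · exact (hF _ _ (hτ.2 0 1 Fin.zero_lt_one)).1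
  · exact (hF _ _ (hτ.2 0 k (Fin.pos_of_ne_zero hk))).2

lemma adj_or_adj_of_mem_range {m : ℕ} {τ : Fin m → V} (hτ : IsSimplex F τ) {x y : V}
    (hx : x ∈ range τ) (hy : y ∈ range τ) (hxy : x ≠ y) : F x y ∨ F y x := by
  obtain ⟨a, rfl⟩ := hx
  obtain ⟨b, rfl⟩ := hy
  rcases lt_or_gt_of_ne (ne_of_apply_ne τ hxy) with hab | hab
  · exact .inl (hτ.2 a b hab)
  · exact .inr (hτ.2 b a hab)

end IsSimplex

lemma range_eq_insert_of_injective_of_subset {m : ℕ} {σ : Fin m → V} {τ : Fin (m + 1) → V}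
    {v : V} (hτ : Injective τ) (h : range τ ⊆ insert v (range σ)) :
    range τ = insert v (range σ) := by
  refine eq_of_subset_of_ncard_le h ?_ (toFinite _)
  calc (insert v (range σ)).ncard ≤ (range σ).ncard + 1 := ncard_insert_le _ _
    _ ≤ m + 1 := by
        rw [← image_univ]
        simpa using ncard_image_le (f := σ) (s := univ) (toFinite _)
    _ = (range τ).ncard := by rw [ncard_range_of_injective hτ, Nat.card_eq_fintype_card,
        Fintype.card_fin]

section SharedFace

variable {m : ℕ} {σ σ' : Fin (m + 1) → V} {i i' : Fin (m + 1)}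

lemma range_subset_insert_of_comp_succAbove_eq (hcom : σ ∘ i.succAbove = σ' ∘ i'.succAbove) :
    range σ' ⊆ insert (σ' i') (range σ) := by
  rintro _ ⟨k, rfl⟩
  rcases eq_or_ne k i' with rfl | hk
  · exact mem_insert _ _
  · obtain ⟨j, rfl⟩ := Fin.exists_succAbove_eq hk
    exact mem_insert_of_mem _ ⟨i.succAbove j, congrFun hcom j⟩

lemma apply_notMem_range_of_comp_succAbove_eq (hσ' : Injective σ')
    (hcom : σ ∘ i.succAbove = σ' ∘ i'.succAbove) (hne : σ i ≠ σ' i') :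
    σ' i' ∉ range σ := by
  rintro ⟨k, hk⟩
  rcases eq_or_ne k i with rfl | hki
  · exact hne hk
  · obtain ⟨j, rfl⟩ := Fin.exists_succAbove_eq hki
    exact i'.succAbove_ne j (hσ' ((congrFun hcom j).symm.trans hk))

end SharedFace

end

theorem almost_simplex_without_missing_edge_has_no_simplex_general {V : Type*}
    (E : V → V → Prop)
    (n : ℕ) (σ σ' : Fin (n + 2) → V) (e : V × V)
    (h : IsAlmostSimplex E σ σ' e) :
    ∀ τ : Fin (n + 3) → V,
      ¬ IsSimplex (fun a b => (a, b) ∈ EdgSet σ ∪ EdgSet σ') τ := by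
  intro τ hτ
  obtain ⟨⟨hσ, -⟩, ⟨hσ', -⟩, i, i', hcom, hne, -⟩ := h
  have hσ'_apex : σ' i' ∉ range σ := apply_notMem_range_of_comp_succAbove_eq hσ' hcom hne
  have hσ_apex : σ i ∉ range σ' := apply_notMem_range_of_comp_succAbove_eq hσ hcom.symm hne.symm
  have hσ'_sub := range_subset_insert_of_comp_succAbove_eq hcom
  have hτ_range : range τ = insert (σ' i') (range σ) := by
    refine range_eq_insert_of_injective_of_subset hτ.1 (hτ.range_subset ?_)
    rintro a b (hab | hab) <;> have := mem_range_of_mem_edgSet hab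
    · exact ⟨mem_insert_of_mem _ this.1, mem_insert_of_mem _ this.2⟩
    · exact ⟨hσ'_sub this.1, hσ'_sub this.2⟩
  rcases hτ.adj_or_adj_of_mem_range (hτ_range ▸ mem_insert_of_mem _ ⟨i, rfl⟩)
    (hτ_range ▸ mem_insert _ _) hne with (hedge | hedge) | (hedge | hedge)
  · exact hσ'_apex (mem_range_of_mem_edgSet hedge).2
  · exact hσ_apex (mem_range_of_mem_edgSet hedge).1
  · exact hσ'_apex (mem_range_of_mem_edgSet hedge).1
  · exact hσ_apex (mem_range_of_mem_edgSet hedge).2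

/-- Let `({σ, σ'}, e)` be an almost-`d`-simplex (`d = n+2 ≥ 2`) in a simple directed
graph. Then the graph with vertices `Ver(σ) ∪ Ver(σ')` and edges `Edg(σ) ∪ Edg(σ')`
(the almost-`d`-simplex without its missing edge `e`) contains no `d`-simplex. -/
theorem almost_simplex_without_missing_edge_has_no_simplex {V : Type*} [Fintype V]
    (E : V → V → Prop) (hE : Irreflexive E)
    (n : ℕ) (σ σ' : Fin (n + 2) → V) (e : V × V)
    (h : IsAlmostSimplex E σ σ' e) :
    ∀ τ : Fin (n + 3) → V,
      ¬ IsSimplex (fun a b => (a, b) ∈ EdgSet σ ∪ EdgSet σ') τ :=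
  almost_simplex_without_missing_edge_has_no_simplex_general E n σ σ' e h
end

section
/- Let V be a finite set, p ∈ [0, 1], and let (X_f)_{f ∈ (V × V) \ Δ_V} be independent Bernoulli(p) random variables (edge indicators of an Erdős–Rényi directed graph on V). Let ({σ, σ'}, e) be a fixed almost-d-simplex structure on V (d ≥ 2), i.e. tuples σ, σ' of vertices of V satisfying the combinatorial conditions of an almost-d-simplex with missing pair e. Then the event A = {X_f = 1 for all f ∈ Edg(σ) ∪ Edg(σ')} (the almost-d-simplex is present in the random graph) is independent of the event B = {X_e = 1}; in particular, if P(A) > 0, the conditional probability that the almost-d-simplex is completed given that it is present equals p. -/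
open MeasureTheory ProbabilityTheory

/-! The missing pair of an almost-simplex joins the two apexes `σ i` and `σ' i'`; each apex
lies outside the other tuple, since that tuple is injective and already contains the common
face. Hence `e` is an edge of neither tuple, and its indicator is independent of them. -/

section EdgSet

variable {V : Type*} {m : ℕ}

theorem EdgSet.finite (σ : Fin m → V) : (EdgSet σ).Finite :=
  (Set.finite_range fun ij : Fin m × Fin m => (σ ij.1, σ ij.2)).subset
    (by rintro _ ⟨i, j, -, rfl⟩; exact ⟨(i, j), rfl⟩)

theorem mem_range_of_mem_edgSet_s13 {σ : Fin m → V} {f : V × V} (hf : f ∈ EdgSet σ) :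
    f.1 ∈ Set.range σ ∧ f.2 ∈ Set.range σ := by
  obtain ⟨i, j, -, rfl⟩ := hf
  exact ⟨⟨i, rfl⟩, ⟨j, rfl⟩⟩

theorem fst_ne_snd_of_mem_edgSet {σ : Fin m → V} (hσ : Function.Injective σ) {f : V × V}
    (hf : f ∈ EdgSet σ) : f.1 ≠ f.2 := by
  obtain ⟨i, j, hij, rfl⟩ := hf
  exact hσ.ne hij.ne

theorem apex_notMem_range_of_comp_succAbove_eq {σ σ' : Fin (m + 1) → V}
    (hσ' : Function.Injective σ') {i i' : Fin (m + 1)}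
    (hface : σ ∘ i.succAbove = σ' ∘ i'.succAbove) (hne : σ i ≠ σ' i') :
    σ' i' ∉ Set.range σ := by
  rintro ⟨b, hb⟩
  rcases eq_or_ne b i with rfl | hbi
  · exact hne hb
  · obtain ⟨c, rfl⟩ := Fin.exists_succAbove_eq hbi
    rw [← Function.comp_apply (f := σ), hface, Function.comp_apply] at hb
    exact Fin.succAbove_ne i' c (hσ' hb)

end EdgSet

namespace IsAlmostSimplex

variable {V : Type*} {E : V → V → Prop} {m : ℕ} {σ σ' : Fin (m + 1) → V} {e : V × V}

theorem fst_ne_snd (h : IsAlmostSimplex E σ σ' e) : e.1 ≠ e.2 := by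
  obtain ⟨-, -, i, i', -, hne, ⟨-, rfl⟩ | ⟨-, rfl⟩⟩ := h
  exacts [hne, hne.symm]

theorem notMem_edgSet_union (h : IsAlmostSimplex E σ σ' e) : e ∉ EdgSet σ ∪ EdgSet σ' := by
  obtain ⟨⟨hσ, -⟩, ⟨hσ', -⟩, i, i', hface, hne, hcase⟩ := h
  have hσ'i' : σ' i' ∉ Set.range σ := apex_notMem_range_of_comp_succAbove_eq hσ' hface hne
  have hσi : σ i ∉ Set.range σ' :=
    apex_notMem_range_of_comp_succAbove_eq hσ hface.symm hne.symm
  rintro (he | he) <;> have := mem_range_of_mem_edgSet_s13 he <;>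
    rcases hcase with ⟨-, rfl⟩ | ⟨-, rfl⟩ <;> tauto

theorem edgSet_union_subset (h : IsAlmostSimplex E σ σ' e) :
    EdgSet σ ∪ EdgSet σ' ⊆ {f | f.1 ≠ f.2} :=
  Set.union_subset (fun _ => fst_ne_snd_of_mem_edgSet h.1.1)
    (fun _ => fst_ne_snd_of_mem_edgSet h.2.1.1)

end IsAlmostSimplex

section Independence

variable {Ω ι : Type*} [MeasurableSpace Ω] {μ : Measure Ω}

theorem ProbabilityTheory.iIndepSet.measure_biInter_inter {s : ι → Set Ω} (h : iIndepSet s μ)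
    {T : Set ι} (hT : T.Finite) {j : ι} (hj : j ∉ T) :
    μ ((⋂ i ∈ T, s i) ∩ s j) = μ (⋂ i ∈ T, s i) * μ (s j) := by
  classical
  lift T to Finset ι using hT
  have := h.meas_biInter (insert j T)
  rw [Finset.set_biInter_insert, Finset.prod_insert (mt Finset.mem_coe.mpr hj), ← h.meas_biInter T] at this
  simpa only [Finset.mem_coe, Set.inter_comm, mul_comm] using this

theorem cond_eq_of_measure_inter_eq_mul [IsFiniteMeasure μ] {s t : Set Ω} (ht : MeasurableSet t)
    (hs : μ s ≠ 0) (hst : μ (s ∩ t) = μ s * μ t) : μ[t | s] = μ t := by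
  rw [cond_apply' ht, hst, ← mul_assoc, ENNReal.inv_mul_cancel hs (measure_ne_top μ s), one_mul]

end Independence

theorem setOf_forall_mem_eq_biInter_subtype {Ω α : Type*} {D : α → Prop} {S : Set α}
    (hS : S ⊆ {f | D f}) (q : α → Ω → Prop) :
    {ω | ∀ f ∈ S, q f ω} = ⋂ f ∈ (Subtype.val ⁻¹' S : Set {f // D f}), {ω | q f ω} := by
  ext ω
  simp only [Set.mem_ofPred_eq, Set.mem_iInter, Set.mem_preimage, Subtype.forall]
  exact ⟨fun hq f _ hf => hq f hf, fun hq f hf => hq f (hS hf) hf⟩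

theorem erdos_renyi_almost_simplex_completion_general {V : Type*}
    {Ω : Type*} [MeasurableSpace Ω] (P : Measure Ω) [IsProbabilityMeasure P]
    (p : ENNReal)
    (X : V × V → Ω → Bool)
    (hmeas : ∀ f : V × V, Measurable (X f))
    (hbern : ∀ f : V × V, f.1 ≠ f.2 → P {ω | X f ω = true} = p)
    (hindep : iIndepSet
      (fun f : {f : V × V // f.1 ≠ f.2} => {ω | X f.1 ω = true}) P)
    (n : ℕ) (σ σ' : Fin (n + 2) → V) (e : V × V)
    (h : IsAlmostSimplex (fun _ _ => True) σ σ' e) :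
    P ({ω | ∀ f ∈ EdgSet σ ∪ EdgSet σ', X f ω = true} ∩ {ω | X e ω = true})
        = P {ω | ∀ f ∈ EdgSet σ ∪ EdgSet σ', X f ω = true} *
            P {ω | X e ω = true} ∧
    (P {ω | ∀ f ∈ EdgSet σ ∪ EdgSet σ', X f ω = true} ≠ 0 →
      (P[|{ω | ∀ f ∈ EdgSet σ ∪ EdgSet σ', X f ω = true}])
          {ω | X e ω = true} = p) := by
  have hA := setOf_forall_mem_eq_biInter_subtype h.edgSet_union_subset
    fun f ω => X f ω = true
  have hfinite : (Subtype.val ⁻¹' (EdgSet σ ∪ EdgSet σ') : Set {f : V × V // f.1 ≠ f.2}).Finite :=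
    ((EdgSet.finite σ).union (EdgSet.finite σ')).preimage Subtype.val_injective.injOn
  have hAB : P ({ω | ∀ f ∈ EdgSet σ ∪ EdgSet σ', X f ω = true} ∩ {ω | X e ω = true})
      = P {ω | ∀ f ∈ EdgSet σ ∪ EdgSet σ', X f ω = true} * P {ω | X e ω = true} := by
    rw [hA]
    exact hindep.measure_biInter_inter hfinite (j := ⟨e, h.fst_ne_snd⟩) h.notMem_edgSet_union
  refine ⟨hAB, fun hA0 => ?_⟩
  have hB : MeasurableSet {ω | X e ω = true} := hmeas e (measurableSet_singleton true)
  rw [cond_eq_of_measure_inter_eq_mul hB hA0 hAB, hbern e h.fst_ne_snd]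

/-- In an Erdős–Rényi directed graph on a finite vertex set `V`, given by independent
Bernoulli(`p`) edge indicators `X f` for the off-diagonal pairs `f`, the event `A` that
a fixed almost-`d`-simplex structure `({σ, σ'}, e)` (`d = n+2 ≥ 2`) is present (all
edges of `Edg(σ) ∪ Edg(σ')` exist) is independent of the event `B` that the missing
edge `e` exists; in particular, if `P(A) > 0`, the conditional probability that the
almost-`d`-simplex is completed given that it is present equals `p`. -/
theorem erdos_renyi_almost_simplex_completion {V : Type*} [Fintype V]
    {Ω : Type*} [MeasurableSpace Ω] (P : Measure Ω) [IsProbabilityMeasure P]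
    (p : ENNReal) (hp : p ≤ 1)
    (X : V × V → Ω → Bool)
    (hmeas : ∀ f : V × V, Measurable (X f))
    (hbern : ∀ f : V × V, f.1 ≠ f.2 → P {ω | X f ω = true} = p)
    (hindep : iIndepSet
      (fun f : {f : V × V // f.1 ≠ f.2} => {ω | X f.1 ω = true}) P)
    (n : ℕ) (σ σ' : Fin (n + 2) → V) (e : V × V)
    (h : IsAlmostSimplex (fun _ _ => True) σ σ' e) :
    P ({ω | ∀ f ∈ EdgSet σ ∪ EdgSet σ', X f ω = true} ∩ {ω | X e ω = true})
        = P {ω | ∀ f ∈ EdgSet σ ∪ EdgSet σ', X f ω = true} *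
            P {ω | X e ω = true} ∧
    (P {ω | ∀ f ∈ EdgSet σ ∪ EdgSet σ', X f ω = true} ≠ 0 →
      (P[|{ω | ∀ f ∈ EdgSet σ ∪ EdgSet σ', X f ω = true}])
          {ω | X e ω = true} = p) :=
  erdos_renyi_almost_simplex_completion_general P p X hmeas hbern hindep n σ σ' e h
end
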